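/- arXiv:2002.01108 — 8 statements merged into one kernel-verified Lean document; each statement's English description precedes it below -/
import Mathlib

section
/- For every ε ∈ (0,1], the matrix Z_ε is invertible. -/
/-!
With `B = A₀⁻¹ M`, the matrix `B` is a strict contraction for the energy form `x ↦ xᵀ M x`:
`M - Bᵀ M B = Bᵀ (A₀ M⁻¹ A₀ - M) B` and `A₀ M⁻¹ A₀ - M = 2τK + τ² K M⁻¹ K` is positive definite.
Hence so is `B ^ N`, so for `|ε| ≤ 1` the map `ε B ^ N` fixes no nonzero vector, i.e.
`1 - ε B ^ N` is invertible, and `Z_ε` is a product of invertible matrices.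
-/

open Matrix
open scoped ComplexOrder

namespace Matrix

variable {n : Type*} [Fintype n] [DecidableEq n] {𝕜 : Type*} [RCLike 𝕜]

theorem PosDef.add_mul_inv_mul_add_sub {M C : Matrix n n 𝕜} (hM : M.PosDef)
    (hC : C.PosDef) : ((M + C) * M⁻¹ * (M + C) - M).PosDef := by
  have hMinv : M * M⁻¹ = 1 := mul_nonsing_inv M hM.det_pos.ne'.isUnit
  have hinvM : M⁻¹ * M = 1 := nonsing_inv_mul M hM.det_pos.ne'.isUnit
  have expand : (M + C) * M⁻¹ * (M + C) - M = C + C + Cᴴ * M⁻¹ * C := by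
    rw [hC.1.eq, add_mul, add_mul, mul_add, mul_add, hMinv, one_mul, mul_assoc, hinvM]
    noncomm_ring
  rw [expand]
  exact (hC.add hC).add_posSemidef (hM.inv.posSemidef.conjTranspose_mul_mul_same C)

theorem PosDef.sub_conjTranspose_inv_add_mul_mul {M C : Matrix n n 𝕜} (hM : M.PosDef)
    (hC : C.PosDef) : (M - ((M + C)⁻¹ * M)ᴴ * M * ((M + C)⁻¹ * M)).PosDef := by
  set A : Matrix n n 𝕜 := M + C
  set B : Matrix n n 𝕜 := A⁻¹ * M
  have hA : A.PosDef := hM.add hC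
  have hAB : A * B = M := by
    rw [← mul_assoc, mul_nonsing_inv A hA.det_pos.ne'.isUnit, one_mul]
  have hBA : Bᴴ * A = M := by
    rw [← hA.1.eq, ← conjTranspose_mul, hAB, hM.1.eq]
  have factor : M - Bᴴ * M * B = Bᴴ * (A * M⁻¹ * A - M) * B :=
    calc M - Bᴴ * M * B = Bᴴ * A * M⁻¹ * (A * B) - Bᴴ * M * B := by
          rw [hBA, hAB, nonsing_inv_mul_cancel_right M M hM.det_pos.ne'.isUnit]
      _ = Bᴴ * (A * M⁻¹ * A - M) * B := by noncomm_ring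
  have hB : Function.Injective B.mulVec :=
    mulVec_injective_iff_isUnit.2 ((isUnit_nonsing_inv_iff.2 hA.isUnit).mul hM.isUnit)
  rw [factor]
  exact (hM.add_mul_inv_mul_add_sub hC).conjTranspose_mul_mul_same hB

theorem PosDef.sub_conjTranspose_pow_mul_mul_pow {R : Type*} [Ring R] [PartialOrder R]
    [StarRing R] [AddLeftMono R] {M B : Matrix n n R}
    (hB : (M - Bᴴ * M * B).PosDef) {N : ℕ} (hN : N ≠ 0) :
    (M - (B ^ N)ᴴ * M * B ^ N).PosDef := by
  obtain ⟨k, rfl⟩ := Nat.exists_eq_succ_of_ne_zero hN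
  induction k with
  | zero => simpa using hB
  | succ k ih =>
    have split : M - (B ^ (k + 2))ᴴ * M * B ^ (k + 2)
        = (M - Bᴴ * M * B) + Bᴴ * (M - (B ^ (k + 1))ᴴ * M * B ^ (k + 1)) * B := by
      rw [pow_succ _ (k + 1), conjTranspose_mul]
      noncomm_ring
    rw [split]
    exact hB.add_posSemidef ((ih k.succ_ne_zero).posSemidef.conjTranspose_mul_mul_same B)

theorem isUnit_one_sub_smul_of_posDef_sub {M T : Matrix n n ℝ} (hM : M.PosSemidef)
    (hT : (M - Tᴴ * M * T).PosDef) {ε : ℝ} (hε : |ε| ≤ 1) : IsUnit (1 - ε • T) := by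
  rw [isUnit_iff_isUnit_det, isUnit_iff_ne_zero]
  intro hdet
  obtain ⟨x, hx, hfix⟩ := exists_mulVec_eq_zero_iff.2 hdet
  have hx_eq : x = ε • T *ᵥ x := by
    rwa [sub_mulVec, one_mulVec, smul_mulVec, sub_eq_zero] at hfix
  have hdecrease : T *ᵥ x ⬝ᵥ M *ᵥ (T *ᵥ x) < x ⬝ᵥ M *ᵥ x := by
    have := hT.dotProduct_mulVec_pos hx
    simp only [star_trivial, sub_mulVec, dotProduct_sub, ← mulVec_mulVec,
      dotProduct_mulVec _ Tᴴ, vecMul_conjTranspose] at this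
    linarith
  have hTx : 0 ≤ T *ᵥ x ⬝ᵥ M *ᵥ (T *ᵥ x) := by
    simpa using hM.dotProduct_mulVec_nonneg (T *ᵥ x)
  have hscale : x ⬝ᵥ M *ᵥ x = ε ^ 2 * (T *ᵥ x ⬝ᵥ M *ᵥ (T *ᵥ x)) := by
    conv_lhs => rw [hx_eq]
    rw [mulVec_smul, dotProduct_smul, smul_dotProduct, smul_eq_mul, smul_eq_mul]
    ring
  have := mul_le_of_le_one_left hTx ((sq_le_one_iff_abs_le_one ε).2 hε)
  linarith

end Matrix

theorem statement1_general (J N : ℕ) (hN : 0 < N) (τ : ℝ) (hτ : 0 < τ)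
    (M K : Matrix (Fin J) (Fin J) ℝ) (hM : M.PosDef) (hK : K.PosDef)
    (A₀ : Matrix (Fin J) (Fin J) ℝ) (hA₀ : A₀ = M + τ • K)
    (ε : ℝ) (hε0 : 0 < ε) (hε1 : ε ≤ 1)
    (Zε : Matrix (Fin J) (Fin J) ℝ)
    (hZε : Zε = ε⁻¹ • ((1 - ε • (A₀⁻¹ * M) ^ N) * M⁻¹)) :
    IsUnit Zε := by
  subst hA₀ hZε
  have hcontract := hM.sub_conjTranspose_inv_add_mul_mul (hK.smul hτ)
  have hε : |ε| ≤ 1 := abs_le.2 ⟨by linarith, hε1⟩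
  have hsub := isUnit_one_sub_smul_of_posDef_sub hM.posSemidef
    (hcontract.sub_conjTranspose_pow_mul_mul_pow hN.ne') hε
  exact ((hsub.mul (isUnit_nonsing_inv_iff.2 hM.isUnit)).smul (Units.mk0 ε⁻¹ (by positivity)))

/-- With `A₀ = M + τK` for symmetric positive definite `M, K`
and `Z_ε = ε⁻¹ (I_J − ε (A₀⁻¹ M)^N) M⁻¹`, the matrix `Z_ε` is invertible for
every `ε ∈ (0, 1]`. -/
theorem statement1 (J N : ℕ) (hJ : 0 < J) (hN : 0 < N) (τ : ℝ) (hτ : 0 < τ)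
    (M K : Matrix (Fin J) (Fin J) ℝ) (hM : M.PosDef) (hK : K.PosDef)
    (A₀ : Matrix (Fin J) (Fin J) ℝ) (hA₀ : A₀ = M + τ • K)
    (ε : ℝ) (hε0 : 0 < ε) (hε1 : ε ≤ 1)
    (Zε : Matrix (Fin J) (Fin J) ℝ)
    (hZε : Zε = ε⁻¹ • ((1 - ε • (A₀⁻¹ * M) ^ N) * M⁻¹)) :
    IsUnit Zε :=
  statement1_general J N hN τ hτ M K hM hK A₀ hA₀ ε hε0 hε1 Zε hZε
end

section
/- For every ε ∈ (0,1], the matrix P_ε is invertible and P_ε⁻¹ = L⁻¹ + L⁻¹E₁Z_ε⁻¹E_N^T L⁻¹. -/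
open Matrix

/-- The all-at-once block lower bidiagonal matrix `L` whose `(i,j)`-th `J × J`
block equals `A₀` if `i = j`, `−M` if `i = j + 1`, and `0` otherwise. -/
def Lmat (N J : ℕ) (A₀ M : Matrix (Fin J) (Fin J) ℝ) :
    Matrix (Fin N × Fin J) (Fin N × Fin J) ℝ :=
  Matrix.of fun p q =>
    if p.1 = q.1 then A₀ p.2 q.2
    else if (p.1 : ℕ) = (q.1 : ℕ) + 1 then -M p.2 q.2 else 0

/-- `E_i = e_i ⊗ I_J`, where `e_i` is the `i`-th standard basis vector of `ℝ^N`. -/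
def Emat (N J : ℕ) (i : Fin N) : Matrix (Fin N × Fin J) (Fin J) ℝ :=
  Matrix.of fun p y => if p.1 = i ∧ p.2 = y then 1 else 0

/-- The block `ε`-circulant preconditioner `P_ε`, agreeing with `L` in every
block except that the top-right `(1,N)`-th `J × J` block equals `−εM`;
equivalently `P_ε = L − ε E₁ M E_Nᵀ`. -/
noncomputable def Pmat (N J : ℕ) (hN : 0 < N) (A₀ M : Matrix (Fin J) (Fin J) ℝ)
    (ε : ℝ) : Matrix (Fin N × Fin J) (Fin N × Fin J) ℝ :=
  Lmat N J A₀ M -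
    ε • (Emat N J ⟨0, hN⟩ * M * (Emat N J ⟨N - 1, Nat.sub_lt hN Nat.one_pos⟩)ᵀ)

/-! `P_ε = L - E₁ (εM) E_Nᵀ` is a rank-`J` perturbation of `L`, so the Woodbury identity gives
`P_ε⁻¹` in terms of `L⁻¹` and the inverse of the capacitance matrix `(εM)⁻¹ - E_Nᵀ L⁻¹ E₁`.
Inverting the block lower bidiagonal `L` blockwise gives `(L⁻¹)ᵢⱼ = (A₀⁻¹M)^(i-j) A₀⁻¹` for `j ≤ i`,
so the corner block `E_Nᵀ L⁻¹ E₁` is `(A₀⁻¹M)^(N-1) A₀⁻¹ = (A₀⁻¹M)^N M⁻¹` and the capacitance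
matrix is exactly `Z_ε`. Finally `Z_ε` is invertible because `A₀⁻¹M` is a strict contraction in
the `M`-norm: if `A₀ y = M x` then `‖x‖²_M - ‖y‖²_M = ‖x - y‖²_M + 2τ yᵀKy`, so `(A₀⁻¹M)^N` has
no eigenvalue `ε⁻¹ ≥ 1`. -/

namespace Matrix.PosDef

variable {n : Type*} [Fintype n] {M D : Matrix n n ℝ}

lemma dotProduct_mulVec_lt_of_add_mulVec_eq (hM : M.PosDef) (hD : D.PosDef) {x y : n → ℝ}
    (hxy : (M + D) *ᵥ y = M *ᵥ x) (hx : x ≠ 0) : y ⬝ᵥ M *ᵥ y < x ⬝ᵥ M *ᵥ x := by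
  have hMsymm : x ⬝ᵥ M *ᵥ y = y ⬝ᵥ M *ᵥ x := by
    rw [dotProduct_mulVec, ← mulVec_transpose, dotProduct_comm,
      ← conjTranspose_eq_transpose_of_trivial, hM.isHermitian.eq]
  have hyx : y ⬝ᵥ M *ᵥ x = y ⬝ᵥ M *ᵥ y + y ⬝ᵥ D *ᵥ y := by
    rw [← hxy, add_mulVec, dotProduct_add]
  have hdiff : (x - y) ⬝ᵥ M *ᵥ (x - y) =
      x ⬝ᵥ M *ᵥ x - y ⬝ᵥ M *ᵥ y - 2 * (y ⬝ᵥ D *ᵥ y) := by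
    simp only [mulVec_sub, dotProduct_sub, sub_dotProduct]
    linarith
  rcases eq_or_ne y 0 with rfl | hy
  · simpa using hM.dotProduct_mulVec_pos hx
  · have hxy_nonneg : 0 ≤ (x - y) ⬝ᵥ M *ᵥ (x - y) := by
      simpa using hM.posSemidef.dotProduct_mulVec_nonneg (x - y)
    have hy_pos : 0 < y ⬝ᵥ D *ᵥ y := by simpa using hD.dotProduct_mulVec_pos hy
    linarith

variable [DecidableEq n]

lemma dotProduct_mulVec_pow_lt (hM : M.PosDef) (hD : D.PosDef) {k : ℕ} (hk : 0 < k)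
    {x : n → ℝ} (hx : x ≠ 0) :
    (((M + D)⁻¹ * M) ^ k *ᵥ x) ⬝ᵥ M *ᵥ (((M + D)⁻¹ * M) ^ k *ᵥ x) < x ⬝ᵥ M *ᵥ x := by
  set S := (M + D)⁻¹ * M
  have hMD : IsUnit (M + D).det := (isUnit_iff_isUnit_det _).mp (hM.add hD).isUnit
  have hS : ∀ y, (M + D) *ᵥ (S *ᵥ y) = M *ᵥ y := fun y => by
    rw [mulVec_mulVec, ← Matrix.mul_assoc, mul_nonsing_inv _ hMD, Matrix.one_mul]
  have hle : ∀ j y, ((S ^ j) *ᵥ y) ⬝ᵥ M *ᵥ ((S ^ j) *ᵥ y) ≤ y ⬝ᵥ M *ᵥ y := by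
    intro j
    induction j with
    | zero => simp
    | succ j ih =>
      intro y
      rw [pow_succ, ← mulVec_mulVec]
      refine (ih _).trans ?_
      rcases eq_or_ne y 0 with rfl | hy
      · simp
      · exact (dotProduct_mulVec_lt_of_add_mulVec_eq hM hD (hS y) hy).le
  obtain ⟨j, rfl⟩ : ∃ j, k = j + 1 := ⟨k - 1, by omega⟩
  rw [pow_succ, ← mulVec_mulVec]
  exact (hle j _).trans_lt (dotProduct_mulVec_lt_of_add_mulVec_eq hM hD (hS x) hx)

lemma isUnit_one_sub_smul_pow (hM : M.PosDef) (hD : D.PosDef) {k : ℕ} (hk : 0 < k)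
    {ε : ℝ} (hε : |ε| ≤ 1) : IsUnit (1 - ε • ((M + D)⁻¹ * M) ^ k) := by
  set T := ((M + D)⁻¹ * M) ^ k
  rw [isUnit_iff_isUnit_det, isUnit_iff_ne_zero]
  intro hdet
  obtain ⟨v, hv0, hv⟩ := exists_mulVec_eq_zero_iff.mpr hdet
  have hfix : v = ε • (T *ᵥ v) := by
    rwa [sub_mulVec, one_mulVec, smul_mulVec, sub_eq_zero] at hv
  have hlt := dotProduct_mulVec_pow_lt hM hD hk hv0
  have hnn : 0 ≤ (T *ᵥ v) ⬝ᵥ M *ᵥ (T *ᵥ v) := by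
    simpa using hM.posSemidef.dotProduct_mulVec_nonneg (T *ᵥ v)
  have hscale : v ⬝ᵥ M *ᵥ v = ε ^ 2 * ((T *ᵥ v) ⬝ᵥ M *ᵥ (T *ᵥ v)) := by
    conv_lhs => rw [hfix]
    rw [mulVec_smul, dotProduct_smul, smul_dotProduct, smul_eq_mul, smul_eq_mul]
    ring
  have hε2 : ε ^ 2 ≤ 1 := (sq_le_one_iff_abs_le_one ε).mpr hε
  nlinarith

end Matrix.PosDef

section Woodbury

variable {m n α : Type*} [Fintype m] [DecidableEq m] [Fintype n] [DecidableEq n] [CommRing α]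
  {A : Matrix n n α} {U : Matrix n m α} {C : Matrix m m α} {V : Matrix m n α}

lemma Matrix.isUnit_sub_mul_mul_and_inv_eq_add (hA : IsUnit A) (hC : IsUnit C)
    (hZ : IsUnit (C⁻¹ - V * A⁻¹ * U)) :
    IsUnit (A - U * C * V) ∧
      (A - U * C * V)⁻¹ = A⁻¹ + A⁻¹ * U * (C⁻¹ - V * A⁻¹ * U)⁻¹ * V * A⁻¹ := by
  have hsub : A - U * C * V = A + -U * C * V := by
    simp only [Matrix.neg_mul, sub_eq_add_neg]
  have hZ' : C⁻¹ - V * A⁻¹ * U = C⁻¹ + V * A⁻¹ * -U := by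
    simp only [Matrix.mul_neg, sub_eq_add_neg]
  rw [hZ'] at hZ ⊢
  rw [hsub]
  refine ⟨?_, ?_⟩
  · obtain ⟨_⟩ := hA.nonempty_invertible
    obtain ⟨_⟩ := hC.nonempty_invertible
    obtain ⟨iZ⟩ := hZ.nonempty_invertible
    simp only [← invOf_eq_nonsing_inv] at iZ
    exact @isUnit_of_invertible _ _ _ (invertibleAddMulMul A (-U) C V)
  · rw [add_mul_mul_inv_eq_sub _ _ _ _ hA hC hZ]
    simp only [Matrix.mul_neg, Matrix.neg_mul, sub_neg_eq_add]

end Woodbury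

section Bidiagonal

variable {R : Type*} [Ring R] (N : ℕ)

def lowerBidiag (a b : R) : Matrix (Fin N) (Fin N) R :=
  of fun i j => if i = j then a else if (i : ℕ) = j + 1 then -b else 0

def lowerBidiagInv (a' b : R) : Matrix (Fin N) (Fin N) R :=
  of fun i j => if j ≤ i then (a' * b) ^ ((i : ℕ) - j) * a' else 0

variable {N}

lemma lowerBidiag_eq (a b : R) :
    lowerBidiag N a b =
      diagonal (fun _ : Fin N => a) - of fun i j : Fin N => if (i : ℕ) = j + 1 then b else 0 := by
  ext i j
  simp only [lowerBidiag, of_apply, Matrix.sub_apply, diagonal_apply]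
  split_ifs <;> first | simp | omega

lemma lowerBidiag_mul_apply (a b : R) (G : Matrix (Fin N) (Fin N) R) (i k : Fin N) :
    (lowerBidiag N a b * G) i k =
      a * G i k - if h : (i : ℕ) = 0 then 0 else b * G ⟨i - 1, by omega⟩ k := by
  rw [lowerBidiag_eq, Matrix.sub_mul, Matrix.sub_apply, diagonal_mul, mul_apply]
  congr 1
  split_ifs with h
  · refine Finset.sum_eq_zero fun j _ => ?_
    rw [of_apply, if_neg (by omega), zero_mul]
  · rw [Finset.sum_eq_single ⟨i - 1, by omega⟩ (fun j _ hj => ?_) (by simp), of_apply,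
      if_pos (by simp; omega)]
    rw [of_apply, if_neg (fun h' => hj (Fin.ext (by simp; omega))), zero_mul]

lemma lowerBidiag_mul_lowerBidiagInv {a a' : R} (b : R) (ha : a * a' = 1) :
    lowerBidiag N a b * lowerBidiagInv N a' b = 1 := by
  have hstep : ∀ d : ℕ, a * ((a' * b) ^ (d + 1) * a') = b * ((a' * b) ^ d * a') := by
    intro d
    rw [pow_succ', ← mul_assoc, ← mul_assoc, ← mul_assoc, ha, one_mul, mul_assoc]
  ext i k
  rw [lowerBidiag_mul_apply, one_apply]
  simp only [lowerBidiagInv, of_apply, Fin.le_def]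
  rcases lt_trichotomy (i : ℕ) k with hlt | heq | hgt
  · rw [if_neg (by omega), if_neg (by omega), if_neg (Fin.ne_of_lt hlt)]
    split_ifs <;> first | omega | simp
  · rw [if_pos heq.ge, if_pos (Fin.ext heq), heq, Nat.sub_self, pow_zero, one_mul, ha]
    split_ifs <;> first | omega | simp
  · obtain ⟨d, hd⟩ : ∃ d, (i : ℕ) - k = d + 1 := ⟨i - k - 1, by omega⟩
    rw [if_pos hgt.le, if_neg (Fin.ne_of_gt hgt), dif_neg (by omega), if_pos (by omega), hd,
      show (i : ℕ) - 1 - k = d by omega, hstep, sub_self]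

end Bidiagonal

section BlockStructure

variable {N J : ℕ}

lemma Lmat_eq_comp (A₀ M : Matrix (Fin J) (Fin J) ℝ) :
    Lmat N J A₀ M = comp (Fin N) (Fin N) (Fin J) (Fin J) ℝ (lowerBidiag N A₀ M) := by
  ext p q
  simp only [Lmat, lowerBidiag, comp_apply, of_apply]
  split_ifs <;> rfl

lemma isUnit_Lmat_and_inv_eq {A₀ : Matrix (Fin J) (Fin J) ℝ} (M : Matrix (Fin J) (Fin J) ℝ)
    (hA₀ : IsUnit A₀) :
    IsUnit (Lmat N J A₀ M) ∧
      (Lmat N J A₀ M)⁻¹ = comp (Fin N) (Fin N) (Fin J) (Fin J) ℝ (lowerBidiagInv N A₀⁻¹ M) := by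
  have h : Lmat N J A₀ M * comp _ _ _ _ ℝ (lowerBidiagInv N A₀⁻¹ M) = 1 := by
    rw [Lmat_eq_comp, ← compRingEquiv_apply, ← compRingEquiv_apply, ← map_mul,
      lowerBidiag_mul_lowerBidiagInv M (mul_nonsing_inv A₀ ((isUnit_iff_isUnit_det A₀).mp hA₀)),
      map_one]
  exact ⟨(isUnit_iff_isUnit_det _).mpr (isUnit_det_of_right_inverse h), inv_eq_right_inv h⟩

lemma Emat_transpose_mul_mul_Emat (i j : Fin N) (H : Matrix (Fin N × Fin J) (Fin N × Fin J) ℝ) :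
    (Emat N J i)ᵀ * H * Emat N J j = (comp (Fin N) (Fin N) (Fin J) (Fin J) ℝ).symm H i j := by
  ext a b
  simp [Emat, mul_apply, Fintype.sum_prod_type, ite_and]

lemma Emat_transpose_mul_inv_Lmat_mul_Emat {A₀ : Matrix (Fin J) (Fin J) ℝ}
    (M : Matrix (Fin J) (Fin J) ℝ) (hA₀ : IsUnit A₀) (hN : 0 < N) :
    (Emat N J ⟨N - 1, Nat.sub_lt hN Nat.one_pos⟩)ᵀ * (Lmat N J A₀ M)⁻¹ * Emat N J ⟨0, hN⟩ =
      (A₀⁻¹ * M) ^ (N - 1) * A₀⁻¹ := by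
  rw [Emat_transpose_mul_mul_Emat, (isUnit_Lmat_and_inv_eq M hA₀).2, Equiv.symm_apply_apply]
  simp [lowerBidiagInv]

lemma inv_smul_sub_Emat_transpose_mul_inv_Lmat_mul_Emat {A₀ M : Matrix (Fin J) (Fin J) ℝ}
    (hA₀ : IsUnit A₀) (hM : IsUnit M) (hN : 0 < N) {ε : ℝ} (hε : ε ≠ 0) :
    (ε • M)⁻¹ - (Emat N J ⟨N - 1, Nat.sub_lt hN Nat.one_pos⟩)ᵀ * (Lmat N J A₀ M)⁻¹ *
        Emat N J ⟨0, hN⟩ = ε⁻¹ • ((1 - ε • (A₀⁻¹ * M) ^ N) * M⁻¹) := by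
  have hMdet : IsUnit M.det := (isUnit_iff_isUnit_det M).mp hM
  have hcorner : (A₀⁻¹ * M) ^ (N - 1) * A₀⁻¹ = (A₀⁻¹ * M) ^ N * M⁻¹ := by
    obtain ⟨n, rfl⟩ : ∃ n, N = n + 1 := ⟨N - 1, by omega⟩
    rw [pow_succ, Matrix.mul_assoc, mul_nonsing_inv_cancel_right _ _ hMdet, Nat.add_sub_cancel]
  let := invertibleOfNonzero hε
  rw [Emat_transpose_mul_inv_Lmat_mul_Emat M hA₀ hN, hcorner, inv_smul _ _ hMdet, invOf_eq_inv,
    Matrix.sub_mul, Matrix.one_mul, smul_sub, Matrix.smul_mul, smul_smul, inv_mul_cancel₀ hε,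
    one_smul]

end BlockStructure

theorem statement3_general (N J : ℕ) (hN : 0 < N) (τ : ℝ) (hτ : 0 < τ)
    (M K : Matrix (Fin J) (Fin J) ℝ) (hM : M.PosDef) (hK : K.PosDef)
    (A₀ : Matrix (Fin J) (Fin J) ℝ) (hA₀ : A₀ = M + τ • K)
    (ε : ℝ) (hε0 : 0 < ε) (hε1 : ε ≤ 1)
    (Zε : Matrix (Fin J) (Fin J) ℝ)
    (hZε : Zε = ε⁻¹ • ((1 - ε • (A₀⁻¹ * M) ^ N) * M⁻¹)) :
    IsUnit (Pmat N J hN A₀ M ε) ∧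
    (Pmat N J hN A₀ M ε)⁻¹ =
      (Lmat N J A₀ M)⁻¹ +
        (Lmat N J A₀ M)⁻¹ * Emat N J ⟨0, hN⟩ * Zε⁻¹ *
          (Emat N J ⟨N - 1, Nat.sub_lt hN Nat.one_pos⟩)ᵀ * (Lmat N J A₀ M)⁻¹ := by
  subst hA₀ hZε
  have hD : (τ • K).PosDef := hK.smul hτ
  have hA : IsUnit (M + τ • K) := (hM.add hD).isUnit
  have hZ : IsUnit (ε⁻¹ • ((1 - ε • ((M + τ • K)⁻¹ * M) ^ N) * M⁻¹)) := by
    have hε : |ε| ≤ 1 := abs_le.mpr ⟨by linarith, hε1⟩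
    simpa only [Units.smul_def, Units.val_mk0] using
      ((hM.isUnit_one_sub_smul_pow hD hN hε).mul (isUnit_nonsing_inv_iff.mpr hM.isUnit)).smul
        (Units.mk0 ε⁻¹ (inv_ne_zero hε0.ne'))
  rw [← inv_smul_sub_Emat_transpose_mul_inv_Lmat_mul_Emat hA hM.isUnit hN hε0.ne'] at hZ ⊢
  rw [Pmat, ← Matrix.smul_mul, ← Matrix.mul_smul]
  exact isUnit_sub_mul_mul_and_inv_eq_add (isUnit_Lmat_and_inv_eq M hA).1
    (hM.isUnit.smul (Units.mk0 ε hε0.ne')) hZ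

/-- For every `ε ∈ (0,1]`, `P_ε` is invertible and
`P_ε⁻¹ = L⁻¹ + L⁻¹ E₁ Z_ε⁻¹ E_Nᵀ L⁻¹`. -/
theorem statement3 (N J : ℕ) (hN : 0 < N) (hJ : 0 < J) (τ : ℝ) (hτ : 0 < τ)
    (M K : Matrix (Fin J) (Fin J) ℝ) (hM : M.PosDef) (hK : K.PosDef)
    (A₀ : Matrix (Fin J) (Fin J) ℝ) (hA₀ : A₀ = M + τ • K)
    (ε : ℝ) (hε0 : 0 < ε) (hε1 : ε ≤ 1)
    (Zε : Matrix (Fin J) (Fin J) ℝ)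
    (hZε : Zε = ε⁻¹ • ((1 - ε • (A₀⁻¹ * M) ^ N) * M⁻¹)) :
    IsUnit (Pmat N J hN A₀ M ε) ∧
    (Pmat N J hN A₀ M ε)⁻¹ =
      (Lmat N J A₀ M)⁻¹ +
        (Lmat N J A₀ M)⁻¹ * Emat N J ⟨0, hN⟩ * Zε⁻¹ *
          (Emat N J ⟨N - 1, Nat.sub_lt hN Nat.one_pos⟩)ᵀ * (Lmat N J A₀ M)⁻¹ :=
  statement3_general N J hN τ hτ M K hM hK A₀ hA₀ ε hε0 hε1 Zε hZε
end

section
/- For every ε ∈ (0,1], P_ε⁻¹L = I_{NJ} + L⁻¹E₁Z_ε⁻¹E_N^T; equivalently, for 1 ≤ i, j ≤ N the (i,j)-th J×J block of P_ε⁻¹L equals I_J if i = j < N, equals (A₀⁻¹M)^{i−1}A₀⁻¹Z_ε⁻¹ if j = N and i < N, equals I_J + (A₀⁻¹M)^{N−1}A₀⁻¹Z_ε⁻¹ if i = j = N, and equals the zero matrix otherwise. -/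
/-!
`P_ε = L + (-E₁) (εM) E_Nᵀ` is a low-rank correction of `L`, so the Woodbury identity gives
`P_ε⁻¹ L = I + L⁻¹ E₁ C⁻¹ E_Nᵀ` with capacitance `C = (εM)⁻¹ - E_Nᵀ L⁻¹ E₁`. Since `L` is block
lower bidiagonal, its first block column `L⁻¹ E₁` solves the recurrence `A₀ Xₖ₊₁ = M Xₖ`,
`A₀ X₀ = I`, so `Xₖ = (A₀⁻¹M)ᵏ A₀⁻¹`; this gives the block formulas and identifies `C` with `Z_ε`.
Finally `Z_ε` is invertible: as `M < A₀`, the map `A₀⁻¹M` strictly decreases the energy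
`x ↦ xᵀA₀x`, so `ε (A₀⁻¹M)ᴺ` cannot fix a nonzero vector when `|ε| ≤ 1`.
-/

open Matrix

theorem Matrix.add_mul_mul_inv_mul_eq_sub {m n : Type*} [Fintype m] [DecidableEq m] [Fintype n]
    [DecidableEq n] {α : Type*} [CommRing α] (A : Matrix n n α) (U : Matrix n m α)
    (C : Matrix m m α) (V : Matrix m n α) (hA : IsUnit A) (hC : IsUnit C)
    (hAC : IsUnit (C⁻¹ + V * A⁻¹ * U)) :
    (A + U * C * V)⁻¹ * A = 1 - A⁻¹ * U * (C⁻¹ + V * A⁻¹ * U)⁻¹ * V := by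
  have hA_det : IsUnit A.det := (isUnit_iff_isUnit_det A).1 hA
  rw [add_mul_mul_inv_eq_sub A U C V hA hC hAC, sub_mul, nonsing_inv_mul A hA_det,
    Matrix.mul_assoc _ A⁻¹ A, nonsing_inv_mul A hA_det, Matrix.mul_one]

def blockCol {ι m n R : Type*} (F : ι → Matrix m n R) : Matrix (ι × m) n R :=
  of fun p y => F p.1 p.2 y

section blockCol

variable {ι m n l R : Type*} [Semiring R]

theorem blockCol_mul [Fintype n] (F : ι → Matrix m n R) (W : Matrix n l R) :
    blockCol F * W = blockCol fun i => F i * W := by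
  ext ⟨i, x⟩ y
  simp [blockCol, mul_apply]

variable [DecidableEq ι]

theorem transpose_blockCol_single_one_mul [Fintype ι] [Fintype m] [DecidableEq m] (k : ι)
    (F : ι → Matrix m n R) :
    (blockCol (Pi.single k (1 : Matrix m m R)))ᵀ * blockCol F = F k := by
  ext x y
  rw [mul_apply, Fintype.sum_prod_type,
    Fintype.sum_eq_single k fun i hi => by simp [blockCol, hi]]
  simp [blockCol, one_apply]

theorem blockCol_mul_transpose_blockCol_single_one_apply [Fintype n] [DecidableEq n] (k : ι)
    (F : ι → Matrix m n R) (i j : ι) (x : m) (y : n) :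
    (blockCol F * (blockCol (Pi.single k (1 : Matrix n n R)))ᵀ) (i, x) (j, y) =
      if j = k then F i x y else 0 := by
  by_cases h : j = k
  · subst h; simp [blockCol, mul_apply, one_apply]
  · simp [blockCol, mul_apply, h]

end blockCol

theorem Emat_eq_blockCol (N J : ℕ) (k : Fin N) : Emat N J k = blockCol (Pi.single k 1) := by
  ext ⟨i, x⟩ y
  by_cases h : i = k
  · subst h; simp [Emat, blockCol, one_apply]
  · simp [Emat, blockCol, h]

theorem det_Lmat (N J : ℕ) (A₀ M : Matrix (Fin J) (Fin J) ℝ) :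
    (Lmat N J A₀ M).det = A₀.det ^ N := by
  have hL : (Lmat N J A₀ M).BlockTriangular fun p => OrderDual.toDual p.1 := by
    intro p q hpq
    have hlt : (p.1 : ℕ) < q.1 := hpq
    simp only [Lmat, of_apply]
    rw [if_neg (by omega), if_neg (by omega)]
  have hblock : ∀ k, ((Lmat N J A₀ M).toSquareBlock (fun p => OrderDual.toDual p.1) k).det =
      A₀.det := by
    intro k
    let e : Fin J ≃ {p : Fin N × Fin J // OrderDual.toDual p.1 = k} :=
      { toFun y := ⟨(OrderDual.ofDual k, y), rfl⟩
        invFun p := p.1.2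
        left_inv _ := rfl
        right_inv p := Subtype.ext (Prod.ext (congrArg OrderDual.ofDual p.2).symm rfl) }
    rw [← det_submatrix_equiv_self e]
    congr 1
    ext x y
    simp [e, Lmat, toSquareBlock, toSquareBlockProp, toBlock]
  simp [hL.det_fintype, hblock]

theorem Lmat_mul_blockCol {N J : ℕ} {A₀ M : Matrix (Fin J) (Fin J) ℝ}
    (G : ℕ → Matrix (Fin J) (Fin J) ℝ) (hG : ∀ k, A₀ * G (k + 1) = M * G k) :
    Lmat N J A₀ M * blockCol (fun i : Fin N => G i) =
      blockCol fun i : Fin N => if (i : ℕ) = 0 then A₀ * G 0 else 0 := by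
  ext ⟨i, x⟩ y
  have hrow : ∀ k : Fin N,
      ∑ w, Lmat N J A₀ M (i, x) (k, w) * blockCol (fun i : Fin N => G i) (k, w) y =
        if i = k then (A₀ * G k) x y else if (i : ℕ) = k + 1 then -(M * G k) x y else 0 := by
    intro k
    split_ifs <;> simp [Lmat, blockCol, mul_apply, *]
  rw [mul_apply, Fintype.sum_prod_type, Fintype.sum_congr _ _ hrow]
  rcases i with ⟨_ | i, hi⟩
  · rw [Fintype.sum_eq_single ⟨0, hi⟩ fun k hk => by simp [Ne.symm hk]]
    simp [blockCol]
  · rw [Fintype.sum_eq_add ⟨i + 1, hi⟩ ⟨i, by omega⟩ (Fin.ne_of_val_ne (by simp))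
      fun k hk => ?_]
    · simp [blockCol, hG]
    · rw [if_neg (Ne.symm hk.1), if_neg fun h => hk.2 (Fin.ext (by simp at h ⊢; omega))]

section QuadraticForm

variable {n : Type*} [Fintype n] {A M : Matrix n n ℝ}

theorem dotProduct_mulVec_le_of_mulVec_eq (hM : M.PosSemidef) (hAM : (A - M).PosSemidef)
    {x a : n → ℝ} (h : A *ᵥ a = M *ᵥ x) : a ⬝ᵥ A *ᵥ a ≤ x ⬝ᵥ M *ᵥ x := by
  have hMx : (x - a) ⬝ᵥ M *ᵥ (x - a) ≥ 0 := hM.dotProduct_mulVec_nonneg (x - a)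
  have hAa : a ⬝ᵥ (A - M) *ᵥ a ≥ 0 := hAM.dotProduct_mulVec_nonneg a
  have hsymm : x ⬝ᵥ M *ᵥ a = a ⬝ᵥ M *ᵥ x := by
    rw [dotProduct_mulVec, ← mulVec_transpose, dotProduct_comm,
      ← conjTranspose_eq_transpose_of_trivial, hM.isHermitian.eq]
  simp only [mulVec_sub, sub_mulVec, dotProduct_sub, sub_dotProduct] at hMx hAa
  rw [h] at hAa ⊢
  linarith

theorem dotProduct_mulVec_pow_succ_lt [DecidableEq n] (hM : M.PosSemidef)
    (hAM : (A - M).PosDef) {x : n → ℝ} (hx : x ≠ 0) (k : ℕ) :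
    ((A⁻¹ * M) ^ (k + 1) *ᵥ x) ⬝ᵥ A *ᵥ ((A⁻¹ * M) ^ (k + 1) *ᵥ x) < x ⬝ᵥ A *ᵥ x := by
  have hA : A.PosDef := by simpa using PosDef.posSemidef_add hM hAM
  have hA_det : IsUnit A.det := (isUnit_iff_isUnit_det A).1 hA.isUnit
  have hM_le : ∀ y : n → ℝ, y ⬝ᵥ M *ᵥ y ≤ y ⬝ᵥ A *ᵥ y := fun y => by
    have := hAM.posSemidef.dotProduct_mulVec_nonneg y
    simp only [star_trivial, sub_mulVec, dotProduct_sub] at this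
    linarith
  have hstep : ∀ y : n → ℝ,
      ((A⁻¹ * M) *ᵥ y) ⬝ᵥ A *ᵥ ((A⁻¹ * M) *ᵥ y) ≤ y ⬝ᵥ M *ᵥ y := fun y =>
    dotProduct_mulVec_le_of_mulVec_eq hM hAM.posSemidef <| by
      rw [mulVec_mulVec, ← Matrix.mul_assoc, mul_nonsing_inv _ hA_det, Matrix.one_mul]
  induction k with
  | zero =>
    have := hAM.dotProduct_mulVec_pos hx
    simp only [star_trivial, sub_mulVec, dotProduct_sub] at this
    rw [zero_add, pow_one]
    linarith [hstep x]
  | succ k ih =>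
    rw [pow_succ', ← mulVec_mulVec]
    linarith [hstep ((A⁻¹ * M) ^ (k + 1) *ᵥ x), hM_le ((A⁻¹ * M) ^ (k + 1) *ᵥ x)]

theorem isUnit_det_one_sub_smul_pow [DecidableEq n] (hM : M.PosSemidef)
    (hAM : (A - M).PosDef) {ε : ℝ} (hε : |ε| ≤ 1) {N : ℕ} (hN : N ≠ 0) :
    IsUnit (1 - ε • (A⁻¹ * M) ^ N).det := by
  obtain ⟨k, rfl⟩ := Nat.exists_eq_succ_of_ne_zero hN
  have hA : A.PosDef := by simpa using PosDef.posSemidef_add hM hAM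
  rw [isUnit_iff_ne_zero]
  intro hdet
  obtain ⟨v, hv, hfix⟩ := exists_mulVec_eq_zero_iff.2 hdet
  set w := (A⁻¹ * M) ^ (k + 1) *ᵥ v
  have hvw : v = ε • w := by
    rwa [sub_mulVec, one_mulVec, smul_mulVec, sub_eq_zero] at hfix
  have hw : 0 ≤ w ⬝ᵥ A *ᵥ w := hA.posSemidef.dotProduct_mulVec_nonneg w
  have hlt : w ⬝ᵥ A *ᵥ w < v ⬝ᵥ A *ᵥ v := dotProduct_mulVec_pow_succ_lt hM hAM hv k
  have hv_eq : v ⬝ᵥ A *ᵥ v = ε * ε * (w ⬝ᵥ A *ᵥ w) := by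
    rw [hvw, mulVec_smul, smul_dotProduct, dotProduct_smul, smul_eq_mul, smul_eq_mul, mul_assoc]
  have hε2 : ε * ε ≤ 1 := by nlinarith [abs_mul_abs_self ε, abs_nonneg ε]
  nlinarith

end QuadraticForm

section Preconditioner

variable {N J : ℕ} {A₀ M : Matrix (Fin J) (Fin J) ℝ}

theorem inv_Lmat_mul_Emat_zero (hN : 0 < N) (hA₀ : IsUnit A₀.det) :
    (Lmat N J A₀ M)⁻¹ * Emat N J ⟨0, hN⟩ =
      blockCol fun i : Fin N => (A₀⁻¹ * M) ^ (i : ℕ) * A₀⁻¹ := by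
  have hrec : ∀ k, A₀ * ((A₀⁻¹ * M) ^ (k + 1) * A₀⁻¹) = M * ((A₀⁻¹ * M) ^ k * A₀⁻¹) :=
    fun k => by
      rw [pow_succ', Matrix.mul_assoc, ← Matrix.mul_assoc A₀, ← Matrix.mul_assoc A₀,
        mul_nonsing_inv A₀ hA₀, Matrix.one_mul]
  have hLX : Lmat N J A₀ M * (blockCol fun i : Fin N => (A₀⁻¹ * M) ^ (i : ℕ) * A₀⁻¹) =
      Emat N J ⟨0, hN⟩ := by
    rw [Lmat_mul_blockCol (fun k => (A₀⁻¹ * M) ^ k * A₀⁻¹) hrec, Emat_eq_blockCol]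
    congr 1
    funext i
    simp [Pi.single_apply, Fin.ext_iff, mul_nonsing_inv _ hA₀]
  rw [← hLX, nonsing_inv_mul_cancel_left _ _ (by rw [det_Lmat]; exact hA₀.pow N)]

theorem transpose_Emat_mul_inv_Lmat_mul_Emat_zero (hN : 0 < N) (hA₀ : IsUnit A₀.det)
    (k : Fin N) :
    (Emat N J k)ᵀ * (Lmat N J A₀ M)⁻¹ * Emat N J ⟨0, hN⟩ = (A₀⁻¹ * M) ^ (k : ℕ) * A₀⁻¹ := by
  rw [Matrix.mul_assoc, inv_Lmat_mul_Emat_zero hN hA₀, Emat_eq_blockCol,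
    transpose_blockCol_single_one_mul]

theorem Pmat_eq_add (hN : 0 < N) (ε : ℝ) :
    Pmat N J hN A₀ M ε = Lmat N J A₀ M +
      -Emat N J ⟨0, hN⟩ * (ε • M) * (Emat N J ⟨N - 1, Nat.sub_lt hN Nat.one_pos⟩)ᵀ := by
  rw [Pmat, Matrix.neg_mul, Matrix.neg_mul, ← sub_eq_add_neg, Matrix.mul_smul, Matrix.smul_mul]

-- `Z_ε` is the capacitance matrix of the Woodbury identity for `P_ε = L + (-E₁) (εM) E_Nᵀ`.
theorem inv_smul_add_transpose_Emat_mul_inv_Lmat_mul_neg_Emat (hN : 0 < N)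
    (hA₀ : IsUnit A₀.det) (hM : IsUnit M.det) {ε : ℝ} (hε : ε ≠ 0) :
    (ε • M)⁻¹ + (Emat N J ⟨N - 1, Nat.sub_lt hN Nat.one_pos⟩)ᵀ * (Lmat N J A₀ M)⁻¹ *
        -Emat N J ⟨0, hN⟩ = ε⁻¹ • ((1 - ε • (A₀⁻¹ * M) ^ N) * M⁻¹) := by
  have hinv : (ε • M)⁻¹ = ε⁻¹ • M⁻¹ := by
    simpa [Units.smul_def] using inv_smul' M (Units.mk0 ε hε) hM
  have hpow : (A₀⁻¹ * M) ^ N * M⁻¹ = (A₀⁻¹ * M) ^ (N - 1) * A₀⁻¹ := by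
    conv_lhs => rw [← Nat.sub_add_cancel hN, pow_succ]
    rw [Matrix.mul_assoc, Matrix.mul_assoc, mul_nonsing_inv M hM, Matrix.mul_one]
  rw [Matrix.mul_neg, transpose_Emat_mul_inv_Lmat_mul_Emat_zero hN hA₀, hinv, sub_mul,
    smul_mul, Matrix.one_mul, smul_sub, smul_smul, inv_mul_cancel₀ hε, one_smul, hpow,
    sub_eq_add_neg]

theorem inv_Pmat_mul_Lmat (hN : 0 < N) (hA₀ : IsUnit A₀.det) (hM : IsUnit M.det) {ε : ℝ}
    (hε : ε ≠ 0) (hW : IsUnit (1 - ε • (A₀⁻¹ * M) ^ N).det) :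
    (Pmat N J hN A₀ M ε)⁻¹ * Lmat N J A₀ M =
      1 + (Lmat N J A₀ M)⁻¹ * Emat N J ⟨0, hN⟩ * (ε⁻¹ • ((1 - ε • (A₀⁻¹ * M) ^ N) * M⁻¹))⁻¹ *
        (Emat N J ⟨N - 1, Nat.sub_lt hN Nat.one_pos⟩)ᵀ := by
  have hL : IsUnit (Lmat N J A₀ M) := by
    rw [isUnit_iff_isUnit_det, det_Lmat]
    exact hA₀.pow N
  have hC : IsUnit (ε • M) := by
    rw [isUnit_iff_isUnit_det, det_smul]
    exact ((isUnit_iff_ne_zero.2 hε).pow _).mul hM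
  have hZ : IsUnit (ε⁻¹ • ((1 - ε • (A₀⁻¹ * M) ^ N) * M⁻¹)) := by
    rw [isUnit_iff_isUnit_det, det_smul, det_mul]
    exact ((isUnit_iff_ne_zero.2 (inv_ne_zero hε)).pow _).mul
      (hW.mul (isUnit_nonsing_inv_det M hM))
  have hSchur := inv_smul_add_transpose_Emat_mul_inv_Lmat_mul_neg_Emat hN hA₀ hM hε
  rw [Pmat_eq_add, add_mul_mul_inv_mul_eq_sub _ _ _ _ hL hC (hSchur ▸ hZ), hSchur,
    Matrix.mul_neg, Matrix.neg_mul, Matrix.neg_mul, sub_neg_eq_add]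

theorem one_add_inv_Lmat_mul_Emat_mul_transpose_Emat_apply (hN : 0 < N)
    (hA₀ : IsUnit A₀.det) (W : Matrix (Fin J) (Fin J) ℝ) (i j : Fin N) (x y : Fin J) :
    (1 + (Lmat N J A₀ M)⁻¹ * Emat N J ⟨0, hN⟩ * W *
        (Emat N J ⟨N - 1, Nat.sub_lt hN Nat.one_pos⟩)ᵀ :
          Matrix (Fin N × Fin J) (Fin N × Fin J) ℝ) (i, x) (j, y) =
      (if i = j then (1 : Matrix (Fin J) (Fin J) ℝ) x y else 0) +
        if (j : ℕ) = N - 1 then ((A₀⁻¹ * M) ^ (i : ℕ) * A₀⁻¹ * W) x y else 0 := by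
  rw [Matrix.add_apply, inv_Lmat_mul_Emat_zero hN hA₀, blockCol_mul, Emat_eq_blockCol,
    blockCol_mul_transpose_blockCol_single_one_apply]
  by_cases h : i = j <;> simp [one_apply, Fin.ext_iff, h]

end Preconditioner

theorem statement4_general (N J : ℕ) (hN : 0 < N) (τ : ℝ) (hτ : 0 < τ)
    (M K : Matrix (Fin J) (Fin J) ℝ) (hM : M.PosDef) (hK : K.PosDef)
    (A₀ : Matrix (Fin J) (Fin J) ℝ) (hA₀ : A₀ = M + τ • K)
    (ε : ℝ) (hε0 : 0 < ε) (hε1 : ε ≤ 1)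
    (Zε : Matrix (Fin J) (Fin J) ℝ)
    (hZε : Zε = ε⁻¹ • ((1 - ε • (A₀⁻¹ * M) ^ N) * M⁻¹)) :
    (Pmat N J hN A₀ M ε)⁻¹ * Lmat N J A₀ M =
      1 + (Lmat N J A₀ M)⁻¹ * Emat N J ⟨0, hN⟩ * Zε⁻¹ *
            (Emat N J ⟨N - 1, Nat.sub_lt hN Nat.one_pos⟩)ᵀ ∧
    ∀ (i j : Fin N) (x y : Fin J),
      (i = j → (i : ℕ) < N - 1 →
        ((Pmat N J hN A₀ M ε)⁻¹ * Lmat N J A₀ M) (i, x) (j, y) =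
          (1 : Matrix (Fin J) (Fin J) ℝ) x y) ∧
      ((j : ℕ) = N - 1 → (i : ℕ) < N - 1 →
        ((Pmat N J hN A₀ M ε)⁻¹ * Lmat N J A₀ M) (i, x) (j, y) =
          ((A₀⁻¹ * M) ^ (i : ℕ) * A₀⁻¹ * Zε⁻¹) x y) ∧
      (i = j → (i : ℕ) = N - 1 →
        ((Pmat N J hN A₀ M ε)⁻¹ * Lmat N J A₀ M) (i, x) (j, y) =
          (1 + (A₀⁻¹ * M) ^ (N - 1) * A₀⁻¹ * Zε⁻¹) x y) ∧
      (i ≠ j → (j : ℕ) ≠ N - 1 →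
        ((Pmat N J hN A₀ M ε)⁻¹ * Lmat N J A₀ M) (i, x) (j, y) = 0) := by
  have hA₀_det : IsUnit A₀.det :=
    (isUnit_iff_isUnit_det A₀).1 (hA₀ ▸ hM.add (hK.smul hτ)).isUnit
  have hAM : (A₀ - M).PosDef := by rw [hA₀, add_sub_cancel_left]; exact hK.smul hτ
  have hW := isUnit_det_one_sub_smul_pow hM.posSemidef hAM (abs_le.2 ⟨by linarith, hε1⟩)
    hN.ne'
  have hmain := inv_Pmat_mul_Lmat hN hA₀_det ((isUnit_iff_isUnit_det M).1 hM.isUnit)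
    hε0.ne' hW
  subst hZε
  refine ⟨hmain, fun i j x y => ?_⟩
  simp only [hmain, one_add_inv_Lmat_mul_Emat_mul_transpose_Emat_apply hN hA₀_det]
  refine ⟨fun hij hi => ?_, fun hj hi => ?_, fun hij hi => ?_, fun hij hj => ?_⟩
  · rw [if_pos hij, if_neg (by omega), add_zero]
  · rw [if_neg fun h => by rw [h] at hi; omega, if_pos hj, zero_add]
  · subst hij
    rw [if_pos rfl, if_pos hi, Matrix.add_apply, hi]
  · rw [if_neg hij, if_neg hj, add_zero]

/-- For every `ε ∈ (0,1]`,
`P_ε⁻¹ L = I_{NJ} + L⁻¹ E₁ Z_ε⁻¹ E_Nᵀ`; blockwise (1-indexed): the `(i,j)`-th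
`J × J` block of `P_ε⁻¹ L` equals `I_J` if `i = j < N`, equals
`(A₀⁻¹M)^(i−1) A₀⁻¹ Z_ε⁻¹` if `j = N` and `i < N`, equals
`I_J + (A₀⁻¹M)^(N−1) A₀⁻¹ Z_ε⁻¹` if `i = j = N`, and `0` otherwise
(here stated with 0-based indices `i, j : Fin N`). -/
theorem statement4 (N J : ℕ) (hN : 0 < N) (hJ : 0 < J) (τ : ℝ) (hτ : 0 < τ)
    (M K : Matrix (Fin J) (Fin J) ℝ) (hM : M.PosDef) (hK : K.PosDef)
    (A₀ : Matrix (Fin J) (Fin J) ℝ) (hA₀ : A₀ = M + τ • K)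
    (ε : ℝ) (hε0 : 0 < ε) (hε1 : ε ≤ 1)
    (Zε : Matrix (Fin J) (Fin J) ℝ)
    (hZε : Zε = ε⁻¹ • ((1 - ε • (A₀⁻¹ * M) ^ N) * M⁻¹)) :
    (Pmat N J hN A₀ M ε)⁻¹ * Lmat N J A₀ M =
      1 + (Lmat N J A₀ M)⁻¹ * Emat N J ⟨0, hN⟩ * Zε⁻¹ *
            (Emat N J ⟨N - 1, Nat.sub_lt hN Nat.one_pos⟩)ᵀ ∧
    ∀ (i j : Fin N) (x y : Fin J),
      (i = j → (i : ℕ) < N - 1 →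
        ((Pmat N J hN A₀ M ε)⁻¹ * Lmat N J A₀ M) (i, x) (j, y) =
          (1 : Matrix (Fin J) (Fin J) ℝ) x y) ∧
      ((j : ℕ) = N - 1 → (i : ℕ) < N - 1 →
        ((Pmat N J hN A₀ M ε)⁻¹ * Lmat N J A₀ M) (i, x) (j, y) =
          ((A₀⁻¹ * M) ^ (i : ℕ) * A₀⁻¹ * Zε⁻¹) x y) ∧
      (i = j → (i : ℕ) = N - 1 →
        ((Pmat N J hN A₀ M ε)⁻¹ * Lmat N J A₀ M) (i, x) (j, y) =
          (1 + (A₀⁻¹ * M) ^ (N - 1) * A₀⁻¹ * Zε⁻¹) x y) ∧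
      (i ≠ j → (j : ℕ) ≠ N - 1 →
        ((Pmat N J hN A₀ M ε)⁻¹ * Lmat N J A₀ M) (i, x) (j, y) = 0) :=
  statement4_general N J hN τ hτ M K hM hK A₀ hA₀ ε hε0 hε1 Zε hZε
end

section
/- For every ε ∈ (0,1], the kernel of P_ε⁻¹L − I_{NJ} has dimension exactly (N−1)J; that is, 1 is an eigenvalue of P_ε⁻¹L of geometric multiplicity (N−1)J. -/
/-!
Since `P_ε⁻¹ L - 1 = P_ε⁻¹ (L - P_ε) = ε P_ε⁻¹ E₁ M E_Nᵀ` and `P_ε⁻¹`, `E₁`, `M` are injective, the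
kernel is that of `E_Nᵀ`: the vectors whose last block vanishes, a space of dimension `(N - 1) J`.

The real content is the invertibility of `P_ε`. The blocks `u₀, …, u_{N-1}` of a vector in its
kernel form a chain of implicit Euler steps `(M + τK) u_{k+1} = M u_k`, closed by
`(M + τK) u₀ = M (ε u_{N-1})`. Testing a step `(M + τK) y = M w` against `y` and using
`2 yᵀMw ≤ yᵀMy + wᵀMw` gives `yᵀMy + 2τ yᵀKy ≤ wᵀMw`, so the energy `uᵀMu` decreases along the
chain; as `ε² ≤ 1`, the closing step then forces `u₀ᵀKu₀ ≤ 0`, so `u₀ = 0` and every `u_k = 0`.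
-/

open Matrix

theorem Function.curry_smul {α β R M : Type*} [SMul R M] (c : R) (f : α × β → M) (a : α) :
    Function.curry (c • f) a = c • Function.curry f a :=
  rfl

theorem Matrix.ker_mulVecLin_nonsing_inv_mul_sub_one {n K : Type*} [Fintype n] [DecidableEq n]
    [Field K] {P L : Matrix n n K} (hP : IsUnit P.det) :
    LinearMap.ker (P⁻¹ * L - 1).mulVecLin = LinearMap.ker (L - P).mulVecLin := by
  rw [← nonsing_inv_mul P hP, ← Matrix.mul_sub, mulVecLin_mul,
    LinearMap.ker_comp_of_ker_eq_bot]
  exact LinearMap.ker_eq_bot.mpr (mulVec_injective_iff_isUnit.mpr (isUnit_nonsing_inv_iff.mpr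
    ((isUnit_iff_isUnit_det P).mpr hP)))

theorem Matrix.ker_mulVecLin_smul_mul_mul {l m n p K : Type*} [Fintype m] [Fintype n] [Fintype p]
    [Field K] {c : K} (hc : c ≠ 0) {A : Matrix l m K} {B : Matrix m n K} (C : Matrix n p K)
    (hA : Function.Injective A.mulVec) (hB : Function.Injective B.mulVec) :
    LinearMap.ker (c • (A * B * C)).mulVecLin = LinearMap.ker C.mulVecLin := by
  ext x
  simp only [LinearMap.mem_ker, mulVecLin_apply, smul_mulVec, smul_eq_zero, hc, false_or,
    ← mulVec_mulVec]
  rw [hA.eq_iff' (mulVec_zero A), hB.eq_iff' (mulVec_zero B)]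

section Energy

variable {ι : Type*} [Fintype ι] {M K : Matrix ι ι ℝ} {τ : ℝ}

theorem Matrix.PosSemidef.two_mul_dotProduct_mulVec_le (hM : M.PosSemidef) (y w : ι → ℝ) :
    2 * (y ⬝ᵥ M *ᵥ w) ≤ y ⬝ᵥ M *ᵥ y + w ⬝ᵥ M *ᵥ w := by
  have hsymm : w ⬝ᵥ M *ᵥ y = y ⬝ᵥ M *ᵥ w := by
    rw [dotProduct_mulVec, ← mulVec_transpose, dotProduct_comm,
      ← conjTranspose_eq_transpose_of_trivial, hM.isHermitian.eq]
  have := hM.dotProduct_mulVec_nonneg (y - w)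
  simp only [star_trivial, mulVec_sub, dotProduct_sub, sub_dotProduct] at this
  linarith

theorem implicitEuler_energy_le (hM : M.PosSemidef) {y w : ι → ℝ}
    (h : (M + τ • K) *ᵥ y = M *ᵥ w) :
    y ⬝ᵥ M *ᵥ y + 2 * τ * (y ⬝ᵥ K *ᵥ y) ≤ w ⬝ᵥ M *ᵥ w := by
  have hy : y ⬝ᵥ M *ᵥ y + τ * (y ⬝ᵥ K *ᵥ y) = y ⬝ᵥ M *ᵥ w := by
    rw [← h, add_mulVec, dotProduct_add, smul_mulVec, dotProduct_smul, smul_eq_mul]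
  linarith [hM.two_mul_dotProduct_mulVec_le y w]

theorem implicitEuler_energy_le_initial (hM : M.PosSemidef) (hK : K.PosSemidef) (hτ : 0 ≤ τ)
    {n : ℕ} {u : Fin (n + 1) → ι → ℝ}
    (hu : ∀ k : Fin n, (M + τ • K) *ᵥ u k.succ = M *ᵥ u k.castSucc) (m : Fin (n + 1)) :
    u m ⬝ᵥ M *ᵥ u m ≤ u 0 ⬝ᵥ M *ᵥ u 0 := by
  induction m using Fin.induction with
  | zero => rfl
  | succ k ih =>
    have hstep := implicitEuler_energy_le hM (hu k)
    have hKnonneg := hK.dotProduct_mulVec_nonneg (u k.succ)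
    rw [star_trivial] at hKnonneg
    nlinarith

theorem implicitEuler_eq_zero_of_periodic (hM : M.PosDef) (hK : K.PosDef) (hτ : 0 < τ) {ε : ℝ}
    (hε : |ε| ≤ 1) {n : ℕ} {u : Fin (n + 1) → ι → ℝ}
    (h0 : (M + τ • K) *ᵥ u 0 = M *ᵥ (ε • u (Fin.last n)))
    (hu : ∀ k : Fin n, (M + τ • K) *ᵥ u k.succ = M *ᵥ u k.castSucc) : u = 0 := by
  have hdec := implicitEuler_energy_le_initial hM.posSemidef hK.posSemidef hτ.le hu
  have hu0 : u 0 = 0 := by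
    by_contra hne
    have hstep := implicitEuler_energy_le hM.posSemidef h0
    have hpos := hK.dotProduct_mulVec_pos hne
    have hlast := hdec (Fin.last n)
    have hlast0 := hM.posSemidef.dotProduct_mulVec_nonneg (u (Fin.last n))
    have hε2 : ε ^ 2 ≤ 1 := (sq_le_one_iff_abs_le_one ε).mpr hε
    simp only [star_trivial, mulVec_smul, dotProduct_smul, smul_dotProduct, smul_eq_mul]
      at hstep hpos hlast0
    nlinarith
  funext m
  by_contra hne
  have hpos := hM.dotProduct_mulVec_pos hne
  have hle := hdec m
  simp only [star_trivial, hu0, mulVec_zero, dotProduct_zero] at hpos hle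
  exact hle.not_gt hpos

end Energy

section Blocks

variable {N J : ℕ}

theorem Emat_transpose_mulVec (i : Fin N) (x : Fin N × Fin J → ℝ) :
    (Emat N J i)ᵀ *ᵥ x = Function.curry x i := by
  ext j
  simp only [mulVec, dotProduct, transpose_apply, Emat, of_apply, Function.curry_apply]
  rw [Finset.sum_eq_single (i, j)] <;> aesop

theorem curry_Emat_mulVec (i k : Fin N) (y : Fin J → ℝ) :
    Function.curry (Emat N J i *ᵥ y) k = if k = i then y else 0 := by
  ext j
  simp only [Function.curry_apply, mulVec, dotProduct, Emat, of_apply]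
  rw [Finset.sum_eq_single j] <;> aesop

theorem Emat_transpose_mulVec_leftInverse (i : Fin N) :
    Function.LeftInverse (Emat N J i)ᵀ.mulVec (Emat N J i).mulVec := fun y => by
  rw [Emat_transpose_mulVec, curry_Emat_mulVec, if_pos rfl]

variable {n : ℕ} (A₀ M : Matrix (Fin J) (Fin J) ℝ) (x : Fin (n + 1) × Fin J → ℝ)

theorem curry_Lmat_mulVec_zero :
    Function.curry (Lmat (n + 1) J A₀ M *ᵥ x) 0 = A₀ *ᵥ Function.curry x 0 := by
  ext j
  simp only [Function.curry_apply, mulVec, dotProduct, Lmat, of_apply, Fintype.sum_prod_type]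
  rw [Finset.sum_eq_single 0] <;> simp +contextual [eq_comm]

theorem curry_Lmat_mulVec_succ (k : Fin n) :
    Function.curry (Lmat (n + 1) J A₀ M *ᵥ x) k.succ =
      A₀ *ᵥ Function.curry x k.succ - M *ᵥ Function.curry x k.castSucc := by
  ext j
  simp only [Function.curry_apply, mulVec, dotProduct, Lmat, of_apply, Fintype.sum_prod_type,
    Pi.sub_apply]
  rw [Finset.sum_eq_add k.succ k.castSucc Fin.castSucc_lt_succ.ne']
  · simp [Fin.castSucc_lt_succ.ne', sub_eq_add_neg]
  · rintro c - ⟨h1, h2⟩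
    have : (k : ℕ) ≠ c := fun h => h2 (Fin.ext (by simp [h]))
    simp [Ne.symm h1, this]
  all_goals simp

theorem Pmat_mulVec (hN : 0 < n + 1) (ε : ℝ) :
    Pmat (n + 1) J hN A₀ M ε *ᵥ x =
      Lmat (n + 1) J A₀ M *ᵥ x -
        ε • (Emat (n + 1) J 0 *ᵥ (M *ᵥ Function.curry x (Fin.last n))) := by
  rw [Pmat, sub_mulVec, smul_mulVec, ← mulVec_mulVec, ← mulVec_mulVec, Emat_transpose_mulVec]
  -- `⟨0, hN⟩` and `⟨n + 1 - 1, _⟩` are `0` and `Fin.last n` definitionally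
  rfl

end Blocks

theorem Pmat_mulVec_injective {N J : ℕ} (hN : 0 < N) {τ : ℝ} (hτ : 0 < τ)
    {M K : Matrix (Fin J) (Fin J) ℝ} (hM : M.PosDef) (hK : K.PosDef) {ε : ℝ} (hε : |ε| ≤ 1) :
    Function.Injective (Pmat N J hN (M + τ • K) M ε).mulVec := by
  obtain ⟨n, rfl⟩ := Nat.exists_eq_add_one_of_ne_zero hN.ne'
  refine (injective_iff_map_eq_zero (Pmat (n + 1) J hN (M + τ • K) M ε).mulVecLin).mpr
    fun x hx => ?_
  have hL : Lmat (n + 1) J (M + τ • K) M *ᵥ x =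
      ε • (Emat (n + 1) J 0 *ᵥ (M *ᵥ Function.curry x (Fin.last n))) := by
    rw [← sub_eq_zero, ← Pmat_mulVec]
    exact hx
  have h0 : (M + τ • K) *ᵥ Function.curry x 0 = M *ᵥ (ε • Function.curry x (Fin.last n)) := by
    simpa only [curry_Lmat_mulVec_zero, Function.curry_smul, curry_Emat_mulVec, if_pos,
      mulVec_smul] using congrArg (Function.curry · 0) hL
  have hsucc (k : Fin n) :
      (M + τ • K) *ᵥ Function.curry x k.succ = M *ᵥ Function.curry x k.castSucc := by
    simpa only [curry_Lmat_mulVec_succ, Function.curry_smul, curry_Emat_mulVec,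
      if_neg k.succ_ne_zero, smul_zero, sub_eq_zero] using congrArg (Function.curry · k.succ) hL
  have hu := implicitEuler_eq_zero_of_periodic hM hK hτ hε h0 hsucc
  funext p
  exact congrFun (congrFun hu p.1) p.2

theorem finrank_ker_Emat_transpose {N J : ℕ} (i : Fin N) :
    Module.finrank ℝ (LinearMap.ker (Emat N J i)ᵀ.mulVecLin) = (N - 1) * J := by
  have hrange : LinearMap.range (Emat N J i)ᵀ.mulVecLin = ⊤ :=
    LinearMap.range_eq_top.mpr (Emat_transpose_mulVec_leftInverse i).surjective
  have := LinearMap.finrank_range_add_finrank_ker (Emat N J i)ᵀ.mulVecLin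
  rw [hrange, finrank_top] at this
  simp only [Module.finrank_fintype_fun_eq_card, Fintype.card_prod,
    Fintype.card_fin] at this
  rw [Nat.sub_one_mul]
  omega

theorem statement6_general (N J : ℕ) (hN : 0 < N) (τ : ℝ) (hτ : 0 < τ)
    (M K : Matrix (Fin J) (Fin J) ℝ) (hM : M.PosDef) (hK : K.PosDef)
    (A₀ : Matrix (Fin J) (Fin J) ℝ) (hA₀ : A₀ = M + τ • K)
    (ε : ℝ) (hε0 : 0 < ε) (hε1 : ε ≤ 1) :
    Module.finrank ℝ
      (LinearMap.ker ((Pmat N J hN A₀ M ε)⁻¹ * Lmat N J A₀ M - 1).mulVecLin) =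
      (N - 1) * J := by
  subst hA₀
  have hP : IsUnit (Pmat N J hN (M + τ • K) M ε).det :=
    (isUnit_iff_isUnit_det _).mp <| mulVec_injective_iff_isUnit.mp <|
      Pmat_mulVec_injective hN hτ hM hK (abs_le.mpr ⟨by linarith, hε1⟩)
  rw [ker_mulVecLin_nonsing_inv_mul_sub_one hP, Pmat, sub_sub_cancel,
    ker_mulVecLin_smul_mul_mul hε0.ne' _ (Emat_transpose_mulVec_leftInverse _).injective
      (mulVec_injective_iff_isUnit.mpr hM.isUnit), finrank_ker_Emat_transpose]

/-- For every `ε ∈ (0,1]`, the kernel of `P_ε⁻¹ L − I_{NJ}`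
has dimension exactly `(N−1)J`: i.e. `1` is an eigenvalue of `P_ε⁻¹ L` of
geometric multiplicity `(N−1)J`. -/
theorem statement6 (N J : ℕ) (hN : 0 < N) (hJ : 0 < J) (τ : ℝ) (hτ : 0 < τ)
    (M K : Matrix (Fin J) (Fin J) ℝ) (hM : M.PosDef) (hK : K.PosDef)
    (A₀ : Matrix (Fin J) (Fin J) ℝ) (hA₀ : A₀ = M + τ • K)
    (ε : ℝ) (hε0 : 0 < ε) (hε1 : ε ≤ 1) :
    Module.finrank ℝ
      (LinearMap.ker ((Pmat N J hN A₀ M ε)⁻¹ * Lmat N J A₀ M - 1).mulVecLin) =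
      (N - 1) * J :=
  statement6_general N J hN τ hτ M K hM hK A₀ hA₀ ε hε0 hε1
end

section
/- For every ε ∈ (0,1], the spectrum of I_J + ε((M⁻¹A₀)^N − εI_J)⁻¹ equals the set {λ^N/(λ^N − ε) : λ an eigenvalue of M^{−1/2}A₀M^{−1/2}}; moreover every eigenvalue λ of M^{−1/2}A₀M^{−1/2} is real with λ > 1, so this spectrum is contained in the real open interval (1, +∞). -/
open Matrix

/-- The square root of a positive semidefinite matrix, as `Matrix.PosSemidef.sqrt` was defined
in Mathlib of December 2024 (since removed). -/
noncomputable def Matrix.PosSemidef.sqrt {n 𝕜 : Type*} [Fintype n] [RCLike 𝕜] [PartialOrder 𝕜]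
    [DecidableEq n]
    {A : Matrix n n 𝕜} (hA : A.PosSemidef) : Matrix n n 𝕜 :=
  (hA.1.eigenvectorUnitary : Matrix n n 𝕜) * diagonal ((↑) ∘ (√·) ∘ hA.1.eigenvalues) *
    (star hA.1.eigenvectorUnitary : Matrix n n 𝕜)

/-! With `B = M^{1/2}` one has `S = B⁻¹ A₀ B⁻¹ = 1 + τ B⁻¹ K B⁻¹`, so `S - 1` is positive definite
and the eigenvalues of the symmetric matrix `S` exceed `1`. Diagonalizing `S = U D U⁻¹` orthogonally
gives `M⁻¹ A₀ = B⁻¹ S B = P D P⁻¹` with `P = B⁻¹ U`. Since `G` is a rational function of `M⁻¹ A₀`,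
`G = P f(D) P⁻¹` with `f(λ) = λ^N / (λ^N - ε)`, and both spectra are read off the diagonals. -/

open scoped ComplexOrder

namespace Matrix

variable {n : Type*} [Fintype n] [DecidableEq n]

section RCLike

variable {𝕜 : Type*} [RCLike 𝕜]

lemma PosSemidef.isHermitian_sqrt {A : Matrix n n 𝕜} (hA : A.PosSemidef) : hA.sqrt.IsHermitian := by
  rw [PosSemidef.sqrt, IsHermitian, conjTranspose_mul, conjTranspose_mul, star_eq_conjTranspose,
    conjTranspose_conjTranspose, diagonal_conjTranspose, mul_assoc]
  congr 3
  ext i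
  simp

lemma PosSemidef.sqrt_mul_self {A : Matrix n n 𝕜} (hA : A.PosSemidef) : hA.sqrt * hA.sqrt = A := by
  have hU := mem_unitaryGroup_iff'.mp hA.1.eigenvectorUnitary.2
  conv_rhs => rw [hA.1.spectral_theorem]
  simp only [PosSemidef.sqrt, Unitary.conjStarAlgAut_apply, mul_assoc]
  rw [← mul_assoc (star _) _, hU, one_mul, ← mul_assoc (diagonal _), diagonal_mul_diagonal]
  congr 3
  ext i
  simp [← RCLike.ofReal_mul, Real.mul_self_sqrt (hA.eigenvalues_nonneg i)]

lemma IsHermitian.exists_eq_conj_diagonal {A : Matrix n n 𝕜} (hA : A.IsHermitian) :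
    ∃ P : Matrix n n 𝕜, IsUnit P.det ∧
      A = P * diagonal (RCLike.ofReal ∘ hA.eigenvalues) * P⁻¹ := by
  have hU := mem_unitaryGroup_iff'.mp hA.eigenvectorUnitary.2
  refine ⟨hA.eigenvectorUnitary, isUnit_det_of_left_inverse hU, ?_⟩
  rw [inv_eq_left_inv hU]
  exact hA.spectral_theorem

lemma IsHermitian.one_lt_eigenvalues {A : Matrix n n 𝕜} (hA : A.IsHermitian) (h : (A - 1).PosDef)
    (i : n) : 1 < hA.eigenvalues i := by
  have hv0 : ⇑(hA.eigenvectorBasis i) ≠ 0 :=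
    (WithLp.ofLp_eq_zero 2).ne.2 <| hA.eigenvectorBasis.orthonormal.ne_zero i
  have hpos := h.re_dotProduct_pos hv0
  have hnorm : RCLike.re (star ⇑(hA.eigenvectorBasis i) ⬝ᵥ ⇑(hA.eigenvectorBasis i)) = 1 := by
    rw [dotProduct_comm, ← EuclideanSpace.inner_eq_star_dotProduct, inner_self_eq_norm_sq,
      hA.eigenvectorBasis.orthonormal.1 i, one_pow]
  rw [sub_mulVec, one_mulVec, dotProduct_sub, map_sub, ← hA.eigenvalues_eq i, hnorm] at hpos
  linarith

lemma posDef_inv_mul_mul_inv_sub_one {B K : Matrix n n 𝕜} (hBH : B.IsHermitian)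
    (hB : IsUnit B.det) (hK : K.PosDef) {τ : ℝ} (hτ : 0 < τ) :
    (B⁻¹ * (B * B + τ • K) * B⁻¹ - 1).PosDef := by
  have hBBB : B⁻¹ * (B * B) * B⁻¹ = 1 := by
    rw [← mul_assoc, nonsing_inv_mul _ hB, one_mul, mul_nonsing_inv _ hB]
  have hstar : star B⁻¹ = B⁻¹ := by
    rw [star_eq_conjTranspose, conjTranspose_nonsing_inv, hBH.eq]
  have hBKB : (B⁻¹ * K * B⁻¹).PosDef := by
    have hU : IsUnit B⁻¹ := isUnit_nonsing_inv_iff.mpr ((isUnit_iff_isUnit_det B).mpr hB)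
    simpa only [hstar] using (IsUnit.posDef_star_left_conjugate_iff hU).mpr hK
  rw [mul_add, add_mul, hBBB, add_sub_cancel_left, Matrix.mul_smul, Matrix.smul_mul]
  exact hBKB.smul hτ

end RCLike

section CommRing

variable {R : Type*} [CommRing R]

lemma mul_self_inv_mul_eq_conj (B X : Matrix n n R) (hB : IsUnit B.det) :
    (B * B)⁻¹ * X = B⁻¹ * (B⁻¹ * X * B⁻¹) * B := by
  simp only [Matrix.mul_inv_rev, mul_assoc, nonsing_inv_mul _ hB, mul_one]

lemma conj_nonsing_inv (P Y : Matrix n n R) (hP : IsUnit P.det) :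
    (P * Y * P⁻¹)⁻¹ = P * Y⁻¹ * P⁻¹ := by
  rw [mul_inv_rev, mul_inv_rev, nonsing_inv_nonsing_inv _ hP, mul_assoc]

lemma one_add_smul_inv_pow_sub_smul_one_conj (P Y : Matrix n n R) (hP : IsUnit P.det) (c : R)
    (N : ℕ) :
    1 + c • ((P * Y * P⁻¹) ^ N - c • 1)⁻¹ = P * (1 + c • (Y ^ N - c • 1)⁻¹) * P⁻¹ := by
  obtain ⟨u, rfl⟩ : IsUnit P := (isUnit_iff_isUnit_det P).mpr hP
  let φ := MulSemiringAction.toAlgEquiv R (Matrix n n R) (ConjAct.toConjAct u)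
  have hφ (Z : Matrix n n R) : φ Z = u * Z * (u : Matrix n n R)⁻¹ := by
    rw [← coe_units_inv]; exact ConjAct.units_smul_def _ _
  have hφ_inv (Z : Matrix n n R) : φ Z⁻¹ = (φ Z)⁻¹ := by
    rw [hφ, hφ, conj_nonsing_inv _ _ hP]
  simp only [← hφ]
  rw [map_add, map_one, map_smul, hφ_inv, map_sub, map_smul, map_one, map_pow]

end CommRing

lemma one_add_smul_inv_pow_sub_smul_one_diagonal {K : Type*} [Field K] (d : n → K) (c : K) (N : ℕ)
    (hd : ∀ i, d i ^ N ≠ c) :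
    1 + c • ((diagonal d) ^ N - c • 1)⁻¹ = diagonal (fun i => d i ^ N / (d i ^ N - c)) := by
  have hd' (i : n) : d i ^ N - c ≠ 0 := sub_ne_zero.mpr (hd i)
  have hinv : (diagonal fun i => (d ^ N) i - c)⁻¹ = diagonal fun i => ((d ^ N) i - c)⁻¹ :=
    inv_eq_right_inv (by simp [diagonal_mul_diagonal, hd'])
  rw [diagonal_pow, smul_one_eq_diagonal, diagonal_sub, hinv, ← diagonal_smul, ← diagonal_one,
    diagonal_add]
  congr 1
  ext i
  simp only [Pi.smul_apply, Pi.pow_apply, smul_eq_mul]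
  field_simp [hd' i]
  ring

lemma spectrum_map_conj_diagonal {K L : Type*} [Field K] [Field L] (f : K →+* L)
    (P : Matrix n n K) (hP : IsUnit P.det) (d : n → K) :
    spectrum L ((P * diagonal d * P⁻¹).map f) = Set.range (f ∘ d) := by
  obtain ⟨u, rfl⟩ : IsUnit P := (isUnit_iff_isUnit_det P).mpr hP
  let v := Units.map f.mapMatrix.toMonoidHom u
  have h : ((u : Matrix n n K) * diagonal d * (u : Matrix n n K)⁻¹).map f =
      (v : Matrix n n L) * diagonal (f ∘ d) * (↑v⁻¹ : Matrix n n L) := by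
    rw [← coe_units_inv]
    simp [v, diagonal_map, Function.comp_def]
  rw [h, spectrum.units_conjugate, spectrum_diagonal]

end Matrix

theorem statement8_general (J N : ℕ) (hN : 0 < N) (τ : ℝ) (hτ : 0 < τ)
    (M K : Matrix (Fin J) (Fin J) ℝ) (hM : M.PosDef) (hK : K.PosDef)
    (A₀ : Matrix (Fin J) (Fin J) ℝ) (hA₀ : A₀ = M + τ • K)
    (ε : ℝ) (hε0 : 0 < ε) (hε1 : ε ≤ 1)
    (S : Matrix (Fin J) (Fin J) ℝ)
    (hS : S = (Matrix.PosSemidef.sqrt hM.posSemidef)⁻¹ * A₀ * (Matrix.PosSemidef.sqrt hM.posSemidef)⁻¹)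
    (G : Matrix (Fin J) (Fin J) ℝ)
    (hG : G = 1 + ε • ((M⁻¹ * A₀) ^ N - ε • (1 : Matrix (Fin J) (Fin J) ℝ))⁻¹) :
    (∀ lam ∈ spectrum ℂ (S.map Complex.ofReal), lam.im = 0 ∧ 1 < lam.re) ∧
    spectrum ℂ (G.map Complex.ofReal) =
      {μ : ℂ | ∃ lam ∈ spectrum ℂ (S.map Complex.ofReal),
        μ = lam ^ N / (lam ^ N - (ε : ℂ))} ∧
    (∀ μ ∈ spectrum ℂ (G.map Complex.ofReal), μ.im = 0 ∧ 1 < μ.re) := by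
  obtain ⟨B, hBH, rfl, hSB⟩ : ∃ B : Matrix (Fin J) (Fin J) ℝ,
      B.IsHermitian ∧ B * B = M ∧ S = B⁻¹ * A₀ * B⁻¹ :=
    ⟨_, hM.posSemidef.isHermitian_sqrt, hM.posSemidef.sqrt_mul_self, hS⟩
  clear hS
  have hB : IsUnit B.det := isUnit_of_mul_isUnit_left <| by
    rw [← det_mul]; exact (isUnit_iff_isUnit_det _).mp hM.isUnit
  have hS1 : (S - 1).PosDef := by
    rw [hSB, hA₀]; exact posDef_inv_mul_mul_inv_sub_one hBH hB hK hτ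
  have hSH : S.IsHermitian := by simpa using hS1.isHermitian.add isHermitian_one
  obtain ⟨U, hU, hSU⟩ := hSH.exists_eq_conj_diagonal
  simp only [RCLike.ofReal_real_eq_id, Function.id_comp] at hSU
  set lam := hSH.eigenvalues
  have hlam (i : Fin J) : ε < lam i ^ N :=
    hε1.trans_lt (one_lt_pow₀ (hSH.one_lt_eigenvalues hS1 i) hN.ne')
  have hP : IsUnit (B⁻¹ * U).det := by
    rw [det_mul]; exact (isUnit_nonsing_inv_det B hB).mul hU
  have hX : (B * B)⁻¹ * A₀ = (B⁻¹ * U) * diagonal lam * (B⁻¹ * U)⁻¹ := by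
    rw [mul_self_inv_mul_eq_conj _ _ hB, ← hSB, hSU, Matrix.mul_inv_rev,
      nonsing_inv_nonsing_inv _ hB]
    simp only [mul_assoc]
  have hGd : G = (B⁻¹ * U) * diagonal (fun i => lam i ^ N / (lam i ^ N - ε)) * (B⁻¹ * U)⁻¹ := by
    rw [hG, hX, one_add_smul_inv_pow_sub_smul_one_conj _ _ hP,
      one_add_smul_inv_pow_sub_smul_one_diagonal _ _ _ fun i => (hlam i).ne']
  have hσS : spectrum ℂ (S.map Complex.ofReal) = Set.range (fun i => (lam i : ℂ)) := by
    rw [hSU]; exact spectrum_map_conj_diagonal Complex.ofRealHom _ hU _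
  have hσG : spectrum ℂ (G.map Complex.ofReal) =
      Set.range (fun i => ((lam i ^ N / (lam i ^ N - ε) : ℝ) : ℂ)) := by
    rw [hGd]; exact spectrum_map_conj_diagonal Complex.ofRealHom _ hP _
  refine ⟨?_, ?_, ?_⟩
  · rw [hσS]
    rintro _ ⟨i, rfl⟩
    exact ⟨Complex.ofReal_im _, by simpa using hSH.one_lt_eigenvalues hS1 i⟩
  · rw [hσG, hσS]
    ext μ
    simp [eq_comm]
  · rw [hσG]
    rintro _ ⟨i, rfl⟩
    refine ⟨Complex.ofReal_im _, ?_⟩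
    rw [Complex.ofReal_re]
    exact (one_lt_div (sub_pos.mpr (hlam i))).mpr (sub_lt_self _ hε0)

/-- For every `ε ∈ (0,1]`, the spectrum (over `ℂ`) of
`I_J + ε ((M⁻¹A₀)^N − ε I_J)⁻¹` equals
`{λ^N/(λ^N − ε) : λ ∈ σ(M^{−1/2} A₀ M^{−1/2})}`; moreover every eigenvalue `λ`
of `M^{−1/2} A₀ M^{−1/2}` is real with `λ > 1`, so this spectrum is contained
in the real open interval `(1, +∞)`.  Here `M^{1/2}` is the (unique) symmetric
positive definite square root of `M` and `M^{−1/2} = (M^{1/2})⁻¹`. -/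
theorem statement8 (J N : ℕ) (hJ : 0 < J) (hN : 0 < N) (τ : ℝ) (hτ : 0 < τ)
    (M K : Matrix (Fin J) (Fin J) ℝ) (hM : M.PosDef) (hK : K.PosDef)
    (A₀ : Matrix (Fin J) (Fin J) ℝ) (hA₀ : A₀ = M + τ • K)
    (ε : ℝ) (hε0 : 0 < ε) (hε1 : ε ≤ 1)
    (S : Matrix (Fin J) (Fin J) ℝ)
    (hS : S = (Matrix.PosSemidef.sqrt hM.posSemidef)⁻¹ * A₀ * (Matrix.PosSemidef.sqrt hM.posSemidef)⁻¹)
    (G : Matrix (Fin J) (Fin J) ℝ)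
    (hG : G = 1 + ε • ((M⁻¹ * A₀) ^ N - ε • (1 : Matrix (Fin J) (Fin J) ℝ))⁻¹) :
    (∀ lam ∈ spectrum ℂ (S.map Complex.ofReal), lam.im = 0 ∧ 1 < lam.re) ∧
    spectrum ℂ (G.map Complex.ofReal) =
      {μ : ℂ | ∃ lam ∈ spectrum ℂ (S.map Complex.ofReal),
        μ = lam ^ N / (lam ^ N - (ε : ℂ))} ∧
    (∀ μ ∈ spectrum ℂ (G.map Complex.ofReal), μ.im = 0 ∧ 1 < μ.re) :=
  statement8_general J N hN τ hτ M K hM hK A₀ hA₀ ε hε0 hε1 S hS G hG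
end

section
/- Let η ∈ (0,1) be a constant and take ε ∈ (0,η]. Then every eigenvalue λ (over ℂ) of P_ε⁻¹L satisfies |λ − 1| ≤ ε/(1−η). -/
open Matrix

/-!
Write a vector `v` blockwise as `v₀, …, v_{N-1}` and put `G = A₀⁻¹ M`. The block rows of
`L v = c · E₁ M E_Nᵀ v` read `v_{k+1} = G v_k` and `v₀ = c G v_{N-1}`, so `v₀ = c Gᴺ v₀`
and `c⁻¹` is an eigenvalue of `Gᴺ`, i.e. `c⁻¹ = tᴺ` for an eigenvalue `t` of `G`. Such a `t`
satisfies `u* M u = t · u* A₀ u` for some `u ≠ 0`, and `A₀ - M = τK` is positive definite,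
so `t` is a Rayleigh quotient in `(0,1)`; hence `c r = 1` with `r ∈ (0,1)`. Since
`P_ε = L - ε E₁ M E_Nᵀ`, this is impossible for `c = ε < 1`, so `P_ε` is invertible, and an
eigenvalue `λ ≠ 1` of `P_ε⁻¹ L` gives it with `c = λε/(λ-1)`, i.e. `λ = 1/(1 - εr)`,
whence `|λ - 1| = εr/(1 - εr) ≤ ε/(1 - η)`.
-/

open scoped ComplexOrder

namespace Matrix

variable {n : Type*} [Fintype n]

theorem mem_spectrum_iff_exists_mulVec_eq_smul [DecidableEq n] {K : Type*} [Field K]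
    (B : Matrix n n K) (μ : K) : μ ∈ spectrum K B ↔ ∃ v ≠ 0, B *ᵥ v = μ • v := by
  rw [← spectrum_toLin', ← Module.End.hasEigenvalue_iff_mem_spectrum, Module.End.HasEigenvalue,
    Module.End.HasUnifEigenvalue, Submodule.ne_bot_iff]
  simp [and_comm]

theorem PosDef.map_ofReal {M : Matrix n n ℝ} (hM : M.PosDef) : (M.map Complex.ofReal).PosDef := by
  have hH : (M.map Complex.ofReal).IsHermitian := hM.isHermitian.map _ fun _ => by simp
  refine PosDef.of_dotProduct_mulVec_pos hH fun u hu => ?_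
  rw [RCLike.pos_iff]
  refine ⟨?_, hH.im_star_dotProduct_mulVec_self u⟩
  set a : n → ℝ := fun i => (u i).re
  set b : n → ℝ := fun i => (u i).im
  have hre : RCLike.re (star u ⬝ᵥ (M.map Complex.ofReal *ᵥ u)) =
      a ⬝ᵥ (M *ᵥ a) + b ⬝ᵥ (M *ᵥ b) := by
    simp [a, b, dotProduct, mulVec, Finset.mul_sum, ← Finset.sum_add_distrib]
  have hab : a ≠ 0 ∨ b ≠ 0 := by
    by_contra! h
    exact hu (funext fun i => Complex.ext (congrFun h.1 i) (congrFun h.2 i))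
  have hpos (x : n → ℝ) (hx : x ≠ 0) : 0 < x ⬝ᵥ (M *ᵥ x) := by
    simpa using hM.dotProduct_mulVec_pos hx
  have hnonneg (x : n → ℝ) : 0 ≤ x ⬝ᵥ (M *ᵥ x) := by
    simpa using hM.posSemidef.dotProduct_mulVec_nonneg x
  rw [hre]
  rcases hab with ha | hb
  · exact add_pos_of_pos_of_nonneg (hpos a ha) (hnonneg b)
  · exact add_pos_of_nonneg_of_pos (hnonneg a) (hpos b hb)

theorem PosDef.exists_mem_Ioo_of_mulVec_eq_smul_mulVec {𝕜 : Type*} [RCLike 𝕜]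
    {A M : Matrix n n 𝕜} (hM : M.PosDef) (hAM : (A - M).PosDef) {t : 𝕜} {u : n → 𝕜}
    (hu : u ≠ 0) (h : M *ᵥ u = t • (A *ᵥ u)) : ∃ r ∈ Set.Ioo (0 : ℝ) 1, t = r := by
  obtain ⟨m, hm, hm_eq⟩ := RCLike.pos_iff_exists_ofReal.1 (hM.dotProduct_mulVec_pos hu)
  obtain ⟨d, hd, hd_eq⟩ := RCLike.pos_iff_exists_ofReal.1 (hAM.dotProduct_mulVec_pos hu)
  have hmt : (m : 𝕜) = t * (m + d) := by
    rw [hm_eq, hd_eq, ← dotProduct_add, ← add_mulVec, add_sub_cancel, h, dotProduct_smul,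
      smul_eq_mul]
  refine ⟨m / (m + d), ⟨by positivity, (div_lt_one (by positivity)).2 (by linarith)⟩, ?_⟩
  rw [RCLike.ofReal_div, eq_div_iff (by norm_cast; positivity), hmt]
  push_cast
  ring

theorem PosDef.exists_mem_Ioo_of_mem_spectrum_pow_inv_mul [DecidableEq n] {A M : Matrix n n ℂ}
    (hM : M.PosDef) (hAM : (A - M).PosDef) {k : ℕ} (hk : 0 < k) {μ : ℂ}
    (hμ : μ ∈ spectrum ℂ ((A⁻¹ * M) ^ k)) : ∃ r ∈ Set.Ioo (0 : ℝ) 1, μ = r := by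
  rw [spectrum.map_pow_of_pos _ hk] at hμ
  obtain ⟨t, ht, rfl⟩ := hμ
  obtain ⟨u, hu, hGu⟩ := (mem_spectrum_iff_exists_mulVec_eq_smul _ _).1 ht
  have hA : A.PosDef := by simpa using hM.add hAM
  have hMu : M *ᵥ u = t • (A *ᵥ u) := by
    rw [← mulVec_smul, ← hGu, mulVec_mulVec, ← Matrix.mul_assoc,
      mul_nonsing_inv _ ((isUnit_iff_isUnit_det A).1 hA.isUnit), Matrix.one_mul]
  obtain ⟨r, ⟨hr0, hr1⟩, rfl⟩ := hM.exists_mem_Ioo_of_mulVec_eq_smul_mulVec hAM hu hMu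
  exact ⟨r ^ k, ⟨pow_pos hr0 k, pow_lt_one₀ hr0.le hr1 hk.ne'⟩, by push_cast; rfl⟩

theorem exists_mulVec_eq_smul_mulVec_of_mem_spectrum_map_inv_mul [DecidableEq n]
    {P L : Matrix n n ℝ} (hP : IsUnit P.det) {lam : ℂ}
    (h : lam ∈ spectrum ℂ ((P⁻¹ * L).map Complex.ofReal)) :
    ∃ v ≠ 0, L.map Complex.ofReal *ᵥ v = lam • (P.map Complex.ofReal *ᵥ v) := by
  obtain ⟨v, hv, hv_eig⟩ := (mem_spectrum_iff_exists_mulVec_eq_smul _ _).1 h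
  refine ⟨v, hv, ?_⟩
  have hL : L.map Complex.ofReal = P.map Complex.ofReal * (P⁻¹ * L).map Complex.ofReal :=
    calc L.map Complex.ofReal = (P * (P⁻¹ * L)).map Complex.ofReal := by
          rw [← Matrix.mul_assoc, mul_nonsing_inv _ hP, Matrix.one_mul]
      _ = _ := Matrix.map_mul (f := Complex.ofRealHom)
  rw [hL, ← mulVec_mulVec, hv_eig, mulVec_smul]

theorem isUnit_det_of_map_ofReal_mulVec_eq_zero [DecidableEq n] {P : Matrix n n ℝ}
    (h : ∀ v : n → ℂ, P.map Complex.ofReal *ᵥ v = 0 → v = 0) : IsUnit P.det := by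
  rw [isUnit_iff_ne_zero]
  intro hdet
  have hdetC : (P.map Complex.ofReal).det = 0 := by
    have := Complex.ofRealHom.map_det P
    rw [hdet, map_zero] at this
    exact this.symm
  obtain ⟨v, hv, hPv⟩ := exists_mulVec_eq_zero_iff.2 hdetC
  exact hv (h v hPv)

theorem map_ofReal_sub_smul_mulVec (L X : Matrix n n ℝ) (ε : ℝ) (v : n → ℂ) :
    (L - ε • X).map Complex.ofReal *ᵥ v =
      L.map Complex.ofReal *ᵥ v - (ε : ℂ) • (X.map Complex.ofReal *ᵥ v) := by
  rw [Matrix.map_sub _ Complex.ofReal_sub, Matrix.map_smul' _ _ _ Complex.ofReal_mul, sub_mulVec,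
    smul_mulVec]

end Matrix

theorem Complex.norm_sub_one_le_of_mul_one_sub_eq_one {lam : ℂ} {d ε η : ℝ} (hd : 0 ≤ d)
    (hdε : d ≤ ε) (hεη : ε ≤ η) (hη : η < 1) (h : lam * (1 - d) = 1) :
    ‖lam - 1‖ ≤ ε / (1 - η) := by
  have hd1 : d < 1 := by linarith
  have hlam : lam - 1 = ((d / (1 - d) : ℝ) : ℂ) := by
    have : (1 - d : ℂ) ≠ 0 := by exact_mod_cast (sub_pos.2 hd1).ne'
    push_cast
    field_simp
    linear_combination h
  rw [hlam, Complex.norm_real, Real.norm_of_nonneg (div_nonneg hd (sub_pos.2 hd1).le)]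
  exact div_le_div₀ (hd.trans hdε) hdε (sub_pos.2 hη) (by linarith)

def cornerBlock (n J : ℕ) (M : Matrix (Fin J) (Fin J) ℝ) :
    Matrix (Fin (n + 1) × Fin J) (Fin (n + 1) × Fin J) ℝ :=
  Emat (n + 1) J 0 * M * (Emat (n + 1) J (Fin.last n))ᵀ

theorem Pmat_eq_sub_cornerBlock (n J : ℕ) (h : 0 < n + 1) (A M : Matrix (Fin J) (Fin J) ℝ)
    (ε : ℝ) : Pmat (n + 1) J h A M ε = Lmat (n + 1) J A M - ε • cornerBlock n J M :=
  rfl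

section BlockRows

variable {n J : ℕ} (A M : Matrix (Fin J) (Fin J) ℝ) (v : Fin (n + 1) × Fin J → ℂ)

theorem curry_Lmat_map_mulVec_zero :
    Function.curry ((Lmat (n + 1) J A M).map Complex.ofReal *ᵥ v) 0 =
      A.map Complex.ofReal *ᵥ Function.curry v 0 := by
  ext x
  simp [Lmat, mulVec, dotProduct, Fintype.sum_prod_type, apply_ite Complex.ofReal]

theorem curry_Lmat_map_mulVec_succ (i : Fin n) :
    Function.curry ((Lmat (n + 1) J A M).map Complex.ofReal *ᵥ v) i.succ =
      A.map Complex.ofReal *ᵥ Function.curry v i.succ -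
        M.map Complex.ofReal *ᵥ Function.curry v i.castSucc := by
  ext x
  simp only [Lmat, mulVec, dotProduct, Fintype.sum_prod_type, map_apply, of_apply,
    Function.curry_apply]
  have hne : i.succ ≠ i.castSucc := Fin.castSucc_lt_succ.ne'
  rw [Fintype.sum_eq_add i.succ i.castSucc hne fun k hk => ?_]
  · simp [hne, sub_eq_add_neg, mulVec, dotProduct]
  · have : (i : ℕ) ≠ k := fun h => hk.2 (Fin.ext h.symm)
    simp [hk.1.symm, this]

theorem curry_cornerBlock_map_mulVec (i : Fin (n + 1)) :
    Function.curry ((cornerBlock n J M).map Complex.ofReal *ᵥ v) i =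
      if i = 0 then M.map Complex.ofReal *ᵥ Function.curry v (Fin.last n) else 0 := by
  ext x
  by_cases hi : i = 0 <;>
    simp [hi, cornerBlock, Emat, Matrix.mul_apply, mulVec, dotProduct, Fintype.sum_prod_type,
      ite_and, apply_ite Complex.ofReal, ite_mul, Finset.sum_ite_eq']

end BlockRows

theorem exists_eq_smul_pow_mulVec_of_Lmat_mulVec_eq {n J : ℕ} {A M : Matrix (Fin J) (Fin J) ℝ}
    (hA : IsUnit (A.map Complex.ofReal).det) {c : ℂ} {v : Fin (n + 1) × Fin J → ℂ}
    (hv : v ≠ 0)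
    (h : (Lmat (n + 1) J A M).map Complex.ofReal *ᵥ v =
      c • ((cornerBlock n J M).map Complex.ofReal *ᵥ v)) :
    ∃ w ≠ 0,
      w = c • (((A.map Complex.ofReal)⁻¹ * M.map Complex.ofReal) ^ (n + 1) *ᵥ w) := by
  set G := (A.map Complex.ofReal)⁻¹ * M.map Complex.ofReal
  have hrow (i : Fin (n + 1)) :
      Function.curry ((Lmat (n + 1) J A M).map Complex.ofReal *ᵥ v) i =
        c • Function.curry ((cornerBlock n J M).map Complex.ofReal *ᵥ v) i :=
    congrArg (Function.curry · i) h
  have hsolve {a b : Fin J → ℂ} (hab : A.map Complex.ofReal *ᵥ a = b) :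
      a = (A.map Complex.ofReal)⁻¹ *ᵥ b := by
    rw [← hab, mulVec_mulVec, nonsing_inv_mul _ hA, one_mulVec]
  have hstep (i : Fin n) : Function.curry v i.succ = G *ᵥ Function.curry v i.castSucc := by
    have := hrow i.succ
    rw [curry_Lmat_map_mulVec_succ, curry_cornerBlock_map_mulVec, if_neg (Fin.succ_ne_zero i),
      smul_zero, sub_eq_zero] at this
    rw [hsolve this, ← mulVec_mulVec]
  have hpow (i : Fin (n + 1)) : Function.curry v i = G ^ (i : ℕ) *ᵥ Function.curry v 0 := by
    induction i using Fin.induction with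
    | zero => simp
    | succ i ih => rw [hstep, ih, mulVec_mulVec, ← pow_succ']; rfl
  refine ⟨Function.curry v 0, fun h0 => hv ?_, ?_⟩
  · ext ⟨i, y⟩
    simpa [h0] using congrFun (hpow i) y
  · have := hrow 0
    rw [curry_Lmat_map_mulVec_zero, curry_cornerBlock_map_mulVec, if_pos rfl] at this
    calc Function.curry v 0
        = (A.map Complex.ofReal)⁻¹ *ᵥ
            (c • (M.map Complex.ofReal *ᵥ Function.curry v (Fin.last n))) := hsolve this
      _ = _ := by rw [hpow, mulVec_smul, mulVec_mulVec, mulVec_mulVec, ← pow_succ', Fin.val_last]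

theorem exists_mem_Ioo_mul_eq_one_of_Lmat_mulVec_eq {n J : ℕ} {A M : Matrix (Fin J) (Fin J) ℝ}
    (hM : M.PosDef) (hAM : (A - M).PosDef) {c : ℂ} {v : Fin (n + 1) × Fin J → ℂ}
    (hv : v ≠ 0)
    (h : (Lmat (n + 1) J A M).map Complex.ofReal *ᵥ v =
      c • ((cornerBlock n J M).map Complex.ofReal *ᵥ v)) :
    ∃ r ∈ Set.Ioo (0 : ℝ) 1, c * r = 1 := by
  have hMc := hM.map_ofReal
  have hAMc : (A.map Complex.ofReal - M.map Complex.ofReal).PosDef := by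
    simpa [Matrix.map_sub] using hAM.map_ofReal
  have hA : IsUnit (A.map Complex.ofReal).det := by
    simpa using (isUnit_iff_isUnit_det _).1 (hMc.add hAMc).isUnit
  obtain ⟨w, hw, hw_eq⟩ := exists_eq_smul_pow_mulVec_of_Lmat_mulVec_eq hA hv h
  have hc : c ≠ 0 := by
    rintro rfl
    exact hw (by simpa using hw_eq)
  have hspec :
      c⁻¹ ∈ spectrum ℂ (((A.map Complex.ofReal)⁻¹ * M.map Complex.ofReal) ^ (n + 1)) := by
    refine (mem_spectrum_iff_exists_mulVec_eq_smul _ _).2 ⟨w, hw, ?_⟩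
    conv_rhs => rw [hw_eq, smul_smul, inv_mul_cancel₀ hc, one_smul]
  obtain ⟨r, hr, hcr⟩ := hMc.exists_mem_Ioo_of_mem_spectrum_pow_inv_mul hAMc n.succ_pos hspec
  exact ⟨r, hr, by rw [← hcr, mul_inv_cancel₀ hc]⟩

theorem isUnit_det_Lmat_sub_smul_cornerBlock {n J : ℕ} {A M : Matrix (Fin J) (Fin J) ℝ}
    (hM : M.PosDef) (hAM : (A - M).PosDef) {ε : ℝ} (hε : ε < 1) :
    IsUnit (Lmat (n + 1) J A M - ε • cornerBlock n J M).det := by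
  refine isUnit_det_of_map_ofReal_mulVec_eq_zero fun v hv0 => ?_
  by_contra hv
  rw [map_ofReal_sub_smul_mulVec, sub_eq_zero] at hv0
  obtain ⟨r, ⟨hr0, hr1⟩, hεr⟩ := exists_mem_Ioo_mul_eq_one_of_Lmat_mulVec_eq hM hAM hv hv0
  have : ε * r = 1 := by exact_mod_cast hεr
  nlinarith

theorem exists_mul_one_sub_eq_one_of_Lmat_mulVec_eq_smul {n J : ℕ}
    {A M : Matrix (Fin J) (Fin J) ℝ} (hM : M.PosDef) (hAM : (A - M).PosDef) {ε : ℝ} {lam : ℂ}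
    (hlam : lam ≠ 1) {v : Fin (n + 1) × Fin J → ℂ} (hv : v ≠ 0)
    (h : (Lmat (n + 1) J A M).map Complex.ofReal *ᵥ v =
      lam • ((Lmat (n + 1) J A M).map Complex.ofReal *ᵥ v -
        (ε : ℂ) • ((cornerBlock n J M).map Complex.ofReal *ᵥ v))) :
    ∃ r ∈ Set.Ioo (0 : ℝ) 1, lam * (1 - ((ε * r : ℝ) : ℂ)) = 1 := by
  have hlam1 : lam - 1 ≠ 0 := sub_ne_zero.2 hlam
  have hpencil : (lam - 1) • ((Lmat (n + 1) J A M).map Complex.ofReal *ᵥ v) =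
      (lam * ε) • ((cornerBlock n J M).map Complex.ofReal *ᵥ v) := by
    linear_combination (norm := module) -h
  obtain ⟨r, hr, hcr⟩ := exists_mem_Ioo_mul_eq_one_of_Lmat_mulVec_eq hM hAM hv
    (c := lam * ε / (lam - 1)) <| by
      rw [div_eq_inv_mul, mul_smul, ← hpencil, inv_smul_smul₀ hlam1]
  refine ⟨r, hr, ?_⟩
  field_simp at hcr
  push_cast
  linear_combination -hcr

theorem statement10_general (N J : ℕ) (hN : 0 < N) (τ : ℝ) (hτ : 0 < τ)
    (M K : Matrix (Fin J) (Fin J) ℝ) (hM : M.PosDef) (hK : K.PosDef)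
    (A₀ : Matrix (Fin J) (Fin J) ℝ) (hA₀ : A₀ = M + τ • K)
    (η : ℝ) (hη1 : η < 1)
    (ε : ℝ) (hε0 : 0 < ε) (hεη : ε ≤ η) :
    ∀ lam ∈ spectrum ℂ
        (((Pmat N J hN A₀ M ε)⁻¹ * Lmat N J A₀ M).map Complex.ofReal),
      ‖lam - 1‖ ≤ ε / (1 - η) := by
  obtain ⟨n, rfl⟩ := Nat.exists_eq_add_one_of_ne_zero hN.ne'
  rw [Pmat_eq_sub_cornerBlock]
  have hAM : (A₀ - M).PosDef := by
    rw [hA₀, add_sub_cancel_left]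
    exact hK.smul hτ
  have hP := isUnit_det_Lmat_sub_smul_cornerBlock (n := n) hM hAM (hεη.trans_lt hη1)
  intro lam hlam
  obtain ⟨v, hv, hLv⟩ := exists_mulVec_eq_smul_mulVec_of_mem_spectrum_map_inv_mul hP hlam
  rw [map_ofReal_sub_smul_mulVec] at hLv
  rcases eq_or_ne lam 1 with rfl | hlam1
  · simpa using div_nonneg hε0.le (sub_nonneg.2 hη1.le)
  obtain ⟨r, ⟨hr0, hr1⟩, hlam_eq⟩ :=
    exists_mul_one_sub_eq_one_of_Lmat_mulVec_eq_smul hM hAM hlam1 hv hLv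
  exact Complex.norm_sub_one_le_of_mul_one_sub_eq_one (by positivity)
    (mul_le_of_le_one_right hε0.le hr1.le) hεη hη1 hlam_eq

/-- Let `η ∈ (0,1)` and `ε ∈ (0,η]`.  Then every eigenvalue
`λ` (over `ℂ`) of `P_ε⁻¹ L` satisfies `|λ − 1| ≤ ε/(1−η)`. -/
theorem statement10 (N J : ℕ) (hN : 0 < N) (hJ : 0 < J) (τ : ℝ) (hτ : 0 < τ)
    (M K : Matrix (Fin J) (Fin J) ℝ) (hM : M.PosDef) (hK : K.PosDef)
    (A₀ : Matrix (Fin J) (Fin J) ℝ) (hA₀ : A₀ = M + τ • K)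
    (η : ℝ) (hη0 : 0 < η) (hη1 : η < 1)
    (ε : ℝ) (hε0 : 0 < ε) (hεη : ε ≤ η) :
    ∀ lam ∈ spectrum ℂ
        (((Pmat N J hN A₀ M ε)⁻¹ * Lmat N J A₀ M).map Complex.ofReal),
      ‖lam - 1‖ ≤ ε / (1 - η) :=
  statement10_general N J hN τ hτ M K hM hK A₀ hA₀ η hη1 ε hε0 hεη
end

section
/- For every ε ∈ (0,1], there exist an invertible matrix V ∈ ℝ^{J×J} and a diagonal matrix D ∈ ℝ^{J×J} such that I_J + (A₀⁻¹M)^{N−1}A₀⁻¹Z_ε⁻¹ = V D V⁻¹ and every diagonal entry of D is strictly greater than 1 (in particular 1 is not an eigenvalue of D). -/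
/-!
Put `B = A₀⁻¹ M` and `G = 1 - ε B^N`. Since `Z_ε⁻¹ = ε M G⁻¹` and `B^(N-1) A₀⁻¹ M = B^N`, the matrix
`1 + B^(N-1) A₀⁻¹ Z_ε⁻¹ = 1 + ε B^N G⁻¹` is just `G⁻¹`. With `R = √M` and the positive definite
`P = R⁻¹ (τK) R⁻¹ = U diag(μ) U⁻¹`, one gets `A₀ = R (1 + P) R`, so `B = R⁻¹ (1 + P)⁻¹ R` is
diagonalized by `V = R⁻¹ U` with eigenvalues `λᵢ = (1 + μᵢ)⁻¹ ∈ (0, 1)`. The same `V` diagonalizes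
`G⁻¹`, with eigenvalues `(1 - ε λᵢ^N)⁻¹ > 1`.
-/

open Matrix

variable {n : Type*} [Fintype n] [DecidableEq n]

namespace Matrix

section Similarity

variable {α : Type*} [CommRing α] {V A : Matrix n n α} {d : n → α}

theorem conj_nonsing_inv_of_isUnit (hV : IsUnit V) (A : Matrix n n α) :
    (V * A * V⁻¹)⁻¹ = V * A⁻¹ * V⁻¹ := by
  rw [mul_inv_rev, mul_inv_rev, nonsing_inv_nonsing_inv _ ((isUnit_iff_isUnit_det V).mp hV),
    mul_assoc]

theorem pow_eq_conj_diagonal (hV : IsUnit V) (hA : A = V * diagonal d * V⁻¹) (k : ℕ) :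
    A ^ k = V * diagonal (d ^ k) * V⁻¹ := by
  lift V to (Matrix n n α)ˣ using hV
  rw [hA, ← diagonal_pow, ← coe_units_inv, Units.conj_pow]

theorem smul_one_add_smul_eq_conj_diagonal (hV : IsUnit V) (hA : A = V * diagonal d * V⁻¹)
    (a c : α) : a • 1 + c • A = V * diagonal (fun i => a + c * d i) * V⁻¹ := by
  have hdiag : diagonal (fun i => a + c * d i) = a • 1 + c • diagonal d := by
    ext i j
    rcases eq_or_ne i j with rfl | h <;> simp [*]
  rw [hdiag, hA, mul_add, add_mul, Matrix.mul_smul, Matrix.smul_mul, mul_one,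
    mul_nonsing_inv _ ((isUnit_iff_isUnit_det V).mp hV), Matrix.mul_smul, Matrix.smul_mul]

end Similarity

theorem inv_eq_conj_diagonal {K : Type*} [Field K] {V A : Matrix n n K} {d : n → K}
    (hV : IsUnit V) (hA : A = V * diagonal d * V⁻¹) (hd : ∀ i, d i ≠ 0) :
    A⁻¹ = V * diagonal d⁻¹ * V⁻¹ := by
  have hdiag : (diagonal d)⁻¹ = diagonal d⁻¹ :=
    inv_eq_right_inv (by simp [diagonal_mul_diagonal, hd])
  rw [hA, conj_nonsing_inv_of_isUnit hV, hdiag]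

theorem PosDef.exists_eq_conj_diagonal {P : Matrix n n ℝ} (hP : P.PosDef) :
    ∃ (U : Matrix n n ℝ) (μ : n → ℝ), IsUnit U ∧ (∀ i, 0 < μ i) ∧ P = U * diagonal μ * U⁻¹ := by
  set U := hP.1.eigenvectorUnitary
  have hUinv : star (U : Matrix n n ℝ) = (U : Matrix n n ℝ)⁻¹ :=
    (inv_eq_left_inv (Unitary.coe_star_mul_self U)).symm
  refine ⟨U, hP.1.eigenvalues, ?_, hP.eigenvalues_pos, ?_⟩
  · exact (Unitary.toUnits U).isUnit
  · simpa [← hUinv] using hP.1.spectral_theorem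

theorem PosDef.exists_inv_add_mul_eq_conj_diagonal {M S : Matrix n n ℝ} (hM : M.PosDef)
    (hS : S.PosDef) : ∃ (V : Matrix n n ℝ) (d : n → ℝ), IsUnit V ∧ (∀ i, 0 < d i ∧ d i < 1) ∧
      (M + S)⁻¹ * M = V * diagonal d * V⁻¹ := by
  obtain ⟨R, hR, hRR⟩ : ∃ R : Matrix n n ℝ, R.PosDef ∧ R * R = M := open scoped MatrixOrder in
    ⟨CFC.sqrt M, (hM.isStrictlyPositive.sqrt).posDef, CFC.sqrt_mul_sqrt_self M hM.posSemidef.nonneg⟩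
  have hRdet : IsUnit R.det := (isUnit_iff_isUnit_det R).mp hR.isUnit
  set P := R⁻¹ * S * R⁻¹
  have hP : P.PosDef := by
    have hRinv : star R⁻¹ = R⁻¹ := hR.1.inv.eq
    rwa [← (isUnit_nonsing_inv_iff.mpr hR.isUnit).posDef_star_left_conjugate_iff, hRinv] at hS
  obtain ⟨U, μ, hU, hμ, hPU⟩ := hP.exists_eq_conj_diagonal
  have h1P : 1 + P = U * diagonal (fun i => 1 + μ i) * U⁻¹ := by
    simpa using smul_one_add_smul_eq_conj_diagonal hU hPU 1 1
  have hMS : (M + S)⁻¹ * M = R⁻¹ * (1 + P)⁻¹ * R⁻¹⁻¹ := by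
    have : M + S = R * (1 + P) * R := by
      rw [mul_add, add_mul, mul_one, hRR]
      simp only [P, ← mul_assoc, mul_nonsing_inv _ hRdet, one_mul]
      rw [mul_assoc, nonsing_inv_mul _ hRdet, mul_one]
    rw [this, mul_inv_rev, mul_inv_rev, ← hRR, nonsing_inv_nonsing_inv _ hRdet]
    simp only [mul_assoc, nonsing_inv_mul_cancel_left _ _ hRdet]
  have hμ1 : ∀ i, 1 < 1 + μ i := fun i => by linarith [hμ i]
  refine ⟨R⁻¹ * U, (fun i => 1 + μ i)⁻¹, (isUnit_nonsing_inv_iff.mpr hR.isUnit).mul hU,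
    fun i => ⟨inv_pos.mpr (one_pos.trans (hμ1 i)), inv_lt_one_of_one_lt₀ (hμ1 i)⟩, ?_⟩
  rw [hMS, inv_eq_conj_diagonal hU h1P fun i => (one_pos.trans (hμ1 i)).ne', mul_inv_rev]
  simp only [mul_assoc]

theorem one_add_pow_mul_inv_mul_inv_eq_inv {K : Type*} [Field K] {A M : Matrix n n K}
    (hM : IsUnit M) {ε : K} (hε : ε ≠ 0) {N : ℕ} (hN : N ≠ 0)
    (hG : IsUnit (1 - ε • (A⁻¹ * M) ^ N)) :
    1 + (A⁻¹ * M) ^ (N - 1) * A⁻¹ * (ε⁻¹ • ((1 - ε • (A⁻¹ * M) ^ N) * M⁻¹))⁻¹ =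
      (1 - ε • (A⁻¹ * M) ^ N)⁻¹ := by
  set B := A⁻¹ * M
  set G := 1 - ε • B ^ N
  have hGG : G * G⁻¹ = 1 := mul_nonsing_inv _ ((isUnit_iff_isUnit_det G).mp hG)
  have hZ : (ε⁻¹ • (G * M⁻¹))⁻¹ = ε • (M * G⁻¹) := by
    refine inv_eq_right_inv ?_
    rw [Matrix.smul_mul, Matrix.mul_smul, smul_smul, inv_mul_cancel₀ hε, one_smul, mul_assoc,
      nonsing_inv_mul_cancel_left _ _ ((isUnit_iff_isUnit_det M).mp hM), hGG]
  have hBN : B ^ (N - 1) * A⁻¹ * (M * G⁻¹) = B ^ N * G⁻¹ := by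
    rw [← pow_sub_one_mul hN]
    simp only [B, mul_assoc]
  rw [hZ, Matrix.mul_smul, hBN, ← Matrix.smul_mul]
  rw [sub_mul, one_mul] at hGG
  rw [← hGG, sub_add_cancel]

end Matrix

theorem statement11_general (J N : ℕ) (hN : 0 < N) (τ : ℝ) (hτ : 0 < τ)
    (M K : Matrix (Fin J) (Fin J) ℝ) (hM : M.PosDef) (hK : K.PosDef)
    (A₀ : Matrix (Fin J) (Fin J) ℝ) (hA₀ : A₀ = M + τ • K)
    (ε : ℝ) (hε0 : 0 < ε) (hε1 : ε ≤ 1)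
    (Zε : Matrix (Fin J) (Fin J) ℝ)
    (hZε : Zε = ε⁻¹ • ((1 - ε • (A₀⁻¹ * M) ^ N) * M⁻¹)) :
    ∃ V D : Matrix (Fin J) (Fin J) ℝ,
      IsUnit V ∧ D.IsDiag ∧
      1 + (A₀⁻¹ * M) ^ (N - 1) * A₀⁻¹ * Zε⁻¹ = V * D * V⁻¹ ∧
      ∀ i : Fin J, 1 < D i i := by
  obtain ⟨V, d, hV, hd, hB⟩ := hM.exists_inv_add_mul_eq_conj_diagonal (hK.smul hτ)
  rw [← hA₀] at hB
  set e : Fin J → ℝ := fun i => 1 - ε * d i ^ N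
  have he : ∀ i, 0 < e i ∧ e i < 1 := fun i => by
    have hdN : 0 < d i ^ N ∧ d i ^ N < 1 :=
      ⟨pow_pos (hd i).1 N, pow_lt_one₀ (hd i).1.le (hd i).2 hN.ne'⟩
    constructor <;> nlinarith [hdN.1, hdN.2]
  have hG : 1 - ε • (A₀⁻¹ * M) ^ N = V * diagonal e * V⁻¹ := by
    simpa [e, sub_eq_add_neg] using
      smul_one_add_smul_eq_conj_diagonal hV (pow_eq_conj_diagonal hV hB N) 1 (-ε)
  have hGu : IsUnit (1 - ε • (A₀⁻¹ * M) ^ N) := by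
    rw [hG]
    exact (hV.mul (isUnit_diagonal.mpr (Pi.isUnit_iff.mpr fun i => (he i).1.ne'.isUnit))).mul
      (isUnit_nonsing_inv_iff.mpr hV)
  refine ⟨V, diagonal e⁻¹, hV, isDiag_diagonal _, ?_, fun i => ?_⟩
  · rw [hZε, one_add_pow_mul_inv_mul_inv_eq_inv hM.isUnit hε0.ne' hN.ne' hGu,
      inv_eq_conj_diagonal hV hG fun i => (he i).1.ne']
  · simpa using one_lt_inv₀ (he i).1 |>.mpr (he i).2

/-- For every `ε ∈ (0,1]`, there exist an invertible matrix
`V ∈ ℝ^{J×J}` and a diagonal matrix `D ∈ ℝ^{J×J}` with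
`I_J + (A₀⁻¹M)^(N−1) A₀⁻¹ Z_ε⁻¹ = V D V⁻¹` and every diagonal entry of `D`
strictly greater than `1` (in particular `1` is not an eigenvalue of `D`). -/
theorem statement11 (J N : ℕ) (hJ : 0 < J) (hN : 0 < N) (τ : ℝ) (hτ : 0 < τ)
    (M K : Matrix (Fin J) (Fin J) ℝ) (hM : M.PosDef) (hK : K.PosDef)
    (A₀ : Matrix (Fin J) (Fin J) ℝ) (hA₀ : A₀ = M + τ • K)
    (ε : ℝ) (hε0 : 0 < ε) (hε1 : ε ≤ 1)
    (Zε : Matrix (Fin J) (Fin J) ℝ)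
    (hZε : Zε = ε⁻¹ • ((1 - ε • (A₀⁻¹ * M) ^ N) * M⁻¹)) :
    ∃ V D : Matrix (Fin J) (Fin J) ℝ,
      IsUnit V ∧ D.IsDiag ∧
      1 + (A₀⁻¹ * M) ^ (N - 1) * A₀⁻¹ * Zε⁻¹ = V * D * V⁻¹ ∧
      ∀ i : Fin J, 1 < D i i :=
  statement11_general J N hN τ hτ M K hM hK A₀ hA₀ ε hε0 hε1 Zε hZε
end

section
/- Let δ ∈ (0,1), set T := Nτ, c₀ := √(κ₂(M)), b_τ := δ√τ/(δ√τ + c₀√T), and take ε ∈ (0, b_τ]. Then for every integer k ≥ 0 and every vector r₀ ∈ ℝ^{NJ} there exists a real polynomial p with deg p ≤ k and p(0) = 1 such that ‖p(P_ε⁻¹L)·r₀‖₂ ≤ (2√δ/(1+δ))^k · ‖r₀‖₂. (Since the GMRES residual at iteration k for the preconditioned system P_ε⁻¹L u = P_ε⁻¹f equals the minimum of ‖p(P_ε⁻¹L)r₀‖₂ over all such polynomials, this is exactly the size-independent linear convergence bound ‖r_k‖₂ ≤ (2√δ/(1+δ))^k ‖r₀‖₂ of the GMRES method applied to the preconditioned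 system.) -/
open Matrix

/-- The Euclidean norm of a real vector. -/
noncomputable def euclNorm {n : Type*} [Fintype n] (v : n → ℝ) : ℝ :=
  Real.sqrt (∑ i, v i ^ 2)

/-- The spectral norm (operator norm induced by the Euclidean vector norm) of a
real matrix. -/
noncomputable def matSpectralNorm {n : Type*} [Fintype n] [DecidableEq n]
    (A : Matrix n n ℝ) : ℝ :=
  ‖LinearMap.toContinuousLinearMap (Matrix.toEuclideanLin A)‖

/-!
Write `L = P_ε + ε C` with `C = E₁ M E_Nᵀ`. Then `P_ε⁻¹ L = I + B` with `B = ε P_ε⁻¹ C`, and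
`p(x) = (1 - x)^k` gives `p(P_ε⁻¹ L) = (-B)^k`, so it suffices that `‖B‖₂ ≤ δ ≤ 2√δ/(1+δ)`.

If `P_ε u = ε C w`, the blocks of `u` satisfy `A₀ u_{i+1} = M u_i`: they are implicit Euler
steps, which do not increase the energy norm `‖x‖_M = √(xᵀ M x)`. The first block satisfies
`A₀ u₁ = ε M (u_N + w_N)`, whence `(1 - ε) ‖u₁‖_M ≤ ε ‖w_N‖_M`. Going from `‖·‖_M` to `‖·‖₂` on
the `N` blocks costs the factor `√N c₀`, and `ε ≤ b_τ` is exactly `ε √N c₀ ≤ δ (1 - ε)`.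
-/

section EuclideanNorm

variable {n : Type*} [Fintype n]

lemma euclNorm_eq_norm (v : n → ℝ) : euclNorm v = ‖WithLp.toLp 2 v‖ := by
  simp [euclNorm, EuclideanSpace.norm_eq]

lemma euclNorm_nonneg (v : n → ℝ) : 0 ≤ euclNorm v :=
  Real.sqrt_nonneg _

lemma euclNorm_eq_zero {v : n → ℝ} : euclNorm v = 0 ↔ v = 0 := by
  rw [euclNorm_eq_norm, norm_eq_zero, WithLp.toLp_eq_zero]

lemma euclNorm_neg (v : n → ℝ) : euclNorm (-v) = euclNorm v := by
  rw [euclNorm_eq_norm, euclNorm_eq_norm, WithLp.toLp_neg, norm_neg]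

lemma dotProduct_le_euclNorm_mul (x y : n → ℝ) : x ⬝ᵥ y ≤ euclNorm x * euclNorm y := by
  have h := real_inner_le_norm (WithLp.toLp 2 x) (WithLp.toLp 2 y)
  rwa [EuclideanSpace.inner_eq_star_dotProduct, star_trivial, dotProduct_comm,
    ← euclNorm_eq_norm, ← euclNorm_eq_norm] at h

lemma matSpectralNorm_nonneg [DecidableEq n] (A : Matrix n n ℝ) : 0 ≤ matSpectralNorm A :=
  norm_nonneg _

lemma euclNorm_mulVec_le [DecidableEq n] (A : Matrix n n ℝ) (v : n → ℝ) :
    euclNorm (A *ᵥ v) ≤ matSpectralNorm A * euclNorm v := by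
  simpa [euclNorm_eq_norm, matSpectralNorm] using
    (LinearMap.toContinuousLinearMap (toEuclideanLin A)).le_opNorm (WithLp.toLp 2 v)

lemma one_le_matSpectralNorm_mul_inv [DecidableEq n] [Nonempty n] {A : Matrix n n ℝ}
    (hA : IsUnit A.det) : 1 ≤ matSpectralNorm A * matSpectralNorm A⁻¹ := by
  obtain ⟨v, hv⟩ := exists_ne (0 : n → ℝ)
  have hpos : 0 < euclNorm v := (euclNorm_nonneg v).lt_of_ne' (euclNorm_eq_zero.not.mpr hv)
  have h : euclNorm v ≤ matSpectralNorm A * matSpectralNorm A⁻¹ * euclNorm v :=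
    calc euclNorm v = euclNorm (A⁻¹ *ᵥ (A *ᵥ v)) := by
          rw [mulVec_mulVec, nonsing_inv_mul A hA, one_mulVec]
      _ ≤ matSpectralNorm A⁻¹ * (matSpectralNorm A * euclNorm v) :=
          (euclNorm_mulVec_le _ _).trans
            (mul_le_mul_of_nonneg_left (euclNorm_mulVec_le _ _) (norm_nonneg _))
      _ = matSpectralNorm A * matSpectralNorm A⁻¹ * euclNorm v := by ring
  exact le_of_mul_le_mul_right (by simpa using h) hpos

end EuclideanNorm

section Blocks

variable {ι κ : Type*} [Fintype ι] [Fintype κ]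

lemma euclNorm_curry_le (u : ι × κ → ℝ) (i : ι) :
    euclNorm (Function.curry u i) ≤ euclNorm u := by
  unfold euclNorm
  gcongr
  rw [Fintype.sum_prod_type]
  exact Finset.single_le_sum (f := fun i ↦ ∑ j, u (i, j) ^ 2) (fun _ _ ↦ by positivity)
    (Finset.mem_univ i)

lemma euclNorm_le_sqrt_card_mul {u : ι × κ → ℝ} {c : ℝ} (hc : 0 ≤ c)
    (h : ∀ i, euclNorm (Function.curry u i) ≤ c) :
    euclNorm u ≤ √(Fintype.card ι) * c := by
  have hblock : ∀ i, ∑ j, u (i, j) ^ 2 ≤ c ^ 2 := fun i ↦ by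
    have := pow_le_pow_left₀ (euclNorm_nonneg _) (h i) 2
    rwa [euclNorm, Real.sq_sqrt (by positivity)] at this
  rw [← Real.sqrt_sq hc, ← Real.sqrt_mul (Nat.cast_nonneg _), euclNorm, Fintype.sum_prod_type]
  gcongr
  simpa using Finset.sum_le_sum fun i (_ : i ∈ Finset.univ) ↦ hblock i

end Blocks

section EnergyNorm

variable {n : Type*} [Fintype n] {M : Matrix n n ℝ}

noncomputable def energyNorm (M : Matrix n n ℝ) (x : n → ℝ) : ℝ :=
  √(x ⬝ᵥ M *ᵥ x)

lemma energyNorm_nonneg (x : n → ℝ) : 0 ≤ energyNorm M x :=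
  Real.sqrt_nonneg _

lemma sq_energyNorm (hM : M.PosSemidef) (x : n → ℝ) : energyNorm M x ^ 2 = x ⬝ᵥ M *ᵥ x :=
  Real.sq_sqrt (by simpa using hM.dotProduct_mulVec_nonneg x)

lemma dotProduct_mulVec_le_energyNorm_mul (hM : M.PosSemidef) (x y : n → ℝ) :
    x ⬝ᵥ M *ᵥ y ≤ energyNorm M x * energyNorm M y := by
  let _ := M.toSeminormedAddCommGroup hM
  let _ := M.toInnerProductSpace hM
  have hinner : ∀ a b : n → ℝ, inner ℝ a b = a ⬝ᵥ M *ᵥ b := fun a b ↦ by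
    change (M *ᵥ b) ⬝ᵥ star a = _
    simp [dotProduct_comm]
  have h := real_inner_le_norm x y
  rwa [norm_eq_sqrt_real_inner x, norm_eq_sqrt_real_inner y, hinner, hinner, hinner] at h

lemma energyNorm_le_euclNorm [DecidableEq n] (M : Matrix n n ℝ) (x : n → ℝ) :
    energyNorm M x ≤ √(matSpectralNorm M) * euclNorm x := by
  rw [← Real.sqrt_sq (euclNorm_nonneg x), ← Real.sqrt_mul (matSpectralNorm_nonneg M)]
  refine Real.sqrt_le_sqrt ?_
  calc x ⬝ᵥ M *ᵥ x ≤ euclNorm x * euclNorm (M *ᵥ x) := dotProduct_le_euclNorm_mul _ _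
    _ ≤ euclNorm x * (matSpectralNorm M * euclNorm x) := by
        gcongr
        · exact euclNorm_nonneg x
        · exact euclNorm_mulVec_le M x
    _ = matSpectralNorm M * euclNorm x ^ 2 := by ring

lemma euclNorm_le_energyNorm [DecidableEq n] (hM : M.PosDef) (x : n → ℝ) :
    euclNorm x ≤ √(matSpectralNorm M⁻¹) * energyNorm M x := by
  have hMM : M * M⁻¹ = 1 := mul_nonsing_inv M (isUnit_iff_ne_zero.mpr hM.det_pos.ne')
  have hsq : euclNorm x ^ 2 = x ⬝ᵥ M *ᵥ (M⁻¹ *ᵥ x) := by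
    rw [mulVec_mulVec, hMM, one_mulVec, euclNorm, Real.sq_sqrt (by positivity), dotProduct]
    simp only [sq]
  have hy : energyNorm M (M⁻¹ *ᵥ x) ≤ √(matSpectralNorm M⁻¹) * euclNorm x := by
    have : energyNorm M (M⁻¹ *ᵥ x) = energyNorm M⁻¹ x := by
      rw [energyNorm, energyNorm, mulVec_mulVec, hMM, one_mulVec, dotProduct_comm]
    exact this ▸ energyNorm_le_euclNorm M⁻¹ x
  have h : euclNorm x * euclNorm x ≤
      (√(matSpectralNorm M⁻¹) * energyNorm M x) * euclNorm x := by
    calc euclNorm x * euclNorm x = x ⬝ᵥ M *ᵥ (M⁻¹ *ᵥ x) := by rw [← hsq, sq]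
      _ ≤ energyNorm M x * energyNorm M (M⁻¹ *ᵥ x) :=
          dotProduct_mulVec_le_energyNorm_mul hM.posSemidef _ _
      _ ≤ energyNorm M x * (√(matSpectralNorm M⁻¹) * euclNorm x) := by
          gcongr
          exact energyNorm_nonneg x
      _ = (√(matSpectralNorm M⁻¹) * energyNorm M x) * euclNorm x := by ring
  rcases (euclNorm_nonneg x).eq_or_lt with h0 | h0
  · rw [← h0]
    exact mul_nonneg (Real.sqrt_nonneg _) (energyNorm_nonneg x)
  · exact le_of_mul_le_mul_right h h0

end EnergyNorm

section ImplicitEuler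

variable {n : Type*} [Fintype n] {M K : Matrix n n ℝ} {τ : ℝ}

lemma sq_energyNorm_le (hM : M.PosSemidef) (hK : K.PosSemidef) (hτ : 0 ≤ τ) (z : n → ℝ) :
    energyNorm M z ^ 2 ≤ z ⬝ᵥ (M + τ • K) *ᵥ z := by
  have := hK.dotProduct_mulVec_nonneg z
  rw [star_trivial] at this
  rw [sq_energyNorm hM, add_mulVec, dotProduct_add, smul_mulVec, dotProduct_smul, smul_eq_mul]
  nlinarith

lemma energyNorm_le_of_add_mulVec_eq (hM : M.PosSemidef) (hK : K.PosSemidef) (hτ : 0 ≤ τ)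
    {z x : n → ℝ} (h : (M + τ • K) *ᵥ z = M *ᵥ x) : energyNorm M z ≤ energyNorm M x := by
  have key : energyNorm M z ^ 2 ≤ energyNorm M z * energyNorm M x :=
    calc energyNorm M z ^ 2 ≤ z ⬝ᵥ (M + τ • K) *ᵥ z := sq_energyNorm_le hM hK hτ z
      _ = z ⬝ᵥ M *ᵥ x := by rw [h]
      _ ≤ energyNorm M z * energyNorm M x := dotProduct_mulVec_le_energyNorm_mul hM z x
  nlinarith [energyNorm_nonneg (M := M) z, energyNorm_nonneg (M := M) x]

lemma one_sub_mul_energyNorm_le (hM : M.PosSemidef) (hK : K.PosSemidef) (hτ : 0 ≤ τ)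
    {ε : ℝ} (hε : 0 ≤ ε) {z x y : n → ℝ} (h : (M + τ • K) *ᵥ z = ε • (M *ᵥ (x + y)))
    (hx : energyNorm M x ≤ energyNorm M z) :
    (1 - ε) * energyNorm M z ≤ ε * energyNorm M y := by
  have key : energyNorm M z ^ 2 ≤ ε * (energyNorm M z * energyNorm M z)
      + ε * (energyNorm M z * energyNorm M y) :=
    calc energyNorm M z ^ 2 ≤ z ⬝ᵥ (M + τ • K) *ᵥ z := sq_energyNorm_le hM hK hτ z
      _ = ε * (z ⬝ᵥ M *ᵥ x) + ε * (z ⬝ᵥ M *ᵥ y) := by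
          rw [h, dotProduct_smul, mulVec_add, dotProduct_add, smul_eq_mul, mul_add]
      _ ≤ ε * (energyNorm M z * energyNorm M z) + ε * (energyNorm M z * energyNorm M y) := by
          gcongr
          · exact (dotProduct_mulVec_le_energyNorm_mul hM z x).trans
              (mul_le_mul_of_nonneg_left hx (energyNorm_nonneg z))
          · exact dotProduct_mulVec_le_energyNorm_mul hM z y
  rcases (energyNorm_nonneg (M := M) z).eq_or_lt with h0 | h0
  · rw [← h0]
    exact (mul_zero _).trans_le (mul_nonneg hε (energyNorm_nonneg y))
  · nlinarith

end ImplicitEuler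

section BlockStructure

variable {N J : ℕ}

def Cmat (hN : 0 < N) (M : Matrix (Fin J) (Fin J) ℝ) : Matrix (Fin N × Fin J) (Fin N × Fin J) ℝ :=
  Emat N J ⟨0, hN⟩ * M * (Emat N J ⟨N - 1, Nat.sub_lt hN Nat.one_pos⟩)ᵀ

lemma Lmat_eq_Pmat_add (hN : 0 < N) (A₀ M : Matrix (Fin J) (Fin J) ℝ) (ε : ℝ) :
    Lmat N J A₀ M = Pmat N J hN A₀ M ε + ε • Cmat hN M :=
  (sub_add_cancel _ _).symm

lemma Cmat_mulVec_curry (hN : 0 < N) (M : Matrix (Fin J) (Fin J) ℝ)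
    (w : Fin N × Fin J → ℝ) (i : Fin N) :
    Function.curry (Cmat hN M *ᵥ w) i =
      if i = ⟨0, hN⟩ then M *ᵥ Function.curry w ⟨N - 1, Nat.sub_lt hN Nat.one_pos⟩ else 0 := by
  funext j
  split_ifs with hi
  · subst hi
    simp [Cmat, Emat, mulVec, dotProduct, Matrix.mul_apply, Fintype.sum_prod_type, ite_and]
  · simp [Cmat, Emat, mulVec, dotProduct, Matrix.mul_apply, hi]

lemma Lmat_mulVec_curry_zero (hN : 0 < N) (A₀ M : Matrix (Fin J) (Fin J) ℝ)
    (u : Fin N × Fin J → ℝ) :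
    Function.curry (Lmat N J A₀ M *ᵥ u) ⟨0, hN⟩ = A₀ *ᵥ Function.curry u ⟨0, hN⟩ := by
  funext j
  simp [Lmat, mulVec, dotProduct, Fintype.sum_prod_type]

lemma Lmat_mulVec_curry_succ (A₀ M : Matrix (Fin J) (Fin J) ℝ)
    (u : Fin N × Fin J → ℝ) {k : ℕ} (hk : k + 1 < N) :
    Function.curry (Lmat N J A₀ M *ᵥ u) ⟨k + 1, hk⟩ =
      A₀ *ᵥ Function.curry u ⟨k + 1, hk⟩ - M *ᵥ Function.curry u ⟨k, by omega⟩ := by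
  funext j
  simp only [Lmat, mulVec, dotProduct, Fintype.sum_prod_type, Function.curry_apply, of_apply]
  rw [Fintype.sum_eq_add ⟨k + 1, hk⟩ ⟨k, by omega⟩ (by simp) fun i ⟨h₁, h₂⟩ ↦ by
    simp [Ne.symm h₁, Fin.ext_iff] at h₂ ⊢; omega]
  simp [mulVec, dotProduct, sub_eq_add_neg]

lemma Lmat_mulVec_of_Pmat_mulVec_eq (hN : 0 < N) {A₀ M : Matrix (Fin J) (Fin J) ℝ} {ε : ℝ}
    {u w : Fin N × Fin J → ℝ} (h : Pmat N J hN A₀ M ε *ᵥ u = ε • (Cmat hN M *ᵥ w)) :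
    Lmat N J A₀ M *ᵥ u = ε • (Cmat hN M *ᵥ (u + w)) := by
  rw [Lmat_eq_Pmat_add hN A₀ M ε, add_mulVec, h, smul_mulVec, ← smul_add, ← mulVec_add, add_comm]

lemma Pmat_mulVec_curry_zero_of_eq (hN : 0 < N) {A₀ M : Matrix (Fin J) (Fin J) ℝ} {ε : ℝ}
    {u w : Fin N × Fin J → ℝ} (h : Pmat N J hN A₀ M ε *ᵥ u = ε • (Cmat hN M *ᵥ w)) :
    A₀ *ᵥ Function.curry u ⟨0, hN⟩ = ε • (M *ᵥ (Function.curry u ⟨N - 1, Nat.sub_lt hN Nat.one_pos⟩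
      + Function.curry w ⟨N - 1, Nat.sub_lt hN Nat.one_pos⟩)) := by
  have := congrArg (Function.curry · ⟨0, hN⟩) (Lmat_mulVec_of_Pmat_mulVec_eq hN h)
  rw [← Lmat_mulVec_curry_zero, this]
  change ε • Function.curry (Cmat hN M *ᵥ (u + w)) ⟨0, hN⟩ = _
  rw [Cmat_mulVec_curry, if_pos rfl]
  rfl

lemma Pmat_mulVec_curry_succ_of_eq (hN : 0 < N) {A₀ M : Matrix (Fin J) (Fin J) ℝ} {ε : ℝ}
    {u w : Fin N × Fin J → ℝ} (h : Pmat N J hN A₀ M ε *ᵥ u = ε • (Cmat hN M *ᵥ w))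
    {k : ℕ} (hk : k + 1 < N) :
    A₀ *ᵥ Function.curry u ⟨k + 1, hk⟩ = M *ᵥ Function.curry u ⟨k, by omega⟩ := by
  have := congrArg (Function.curry · ⟨k + 1, hk⟩) (Lmat_mulVec_of_Pmat_mulVec_eq hN h)
  change _ = ε • Function.curry (Cmat hN M *ᵥ (u + w)) ⟨k + 1, hk⟩ at this
  rw [Lmat_mulVec_curry_succ, Cmat_mulVec_curry, if_neg (by simp [Fin.ext_iff]), smul_zero] at this
  exact sub_eq_zero.mp this

end BlockStructure

section EnergyEstimate

variable {N J : ℕ} {M K : Matrix (Fin J) (Fin J) ℝ} {τ ε : ℝ}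

lemma one_sub_mul_euclNorm_le_of_Pmat_mulVec_eq (hN : 0 < N) (hM : M.PosDef)
    (hK : K.PosSemidef) (hτ : 0 ≤ τ) (hε0 : 0 ≤ ε) (hε1 : ε ≤ 1) {u w : Fin N × Fin J → ℝ}
    (h : Pmat N J hN (M + τ • K) M ε *ᵥ u = ε • (Cmat hN M *ᵥ w)) :
    (1 - ε) * euclNorm u ≤
      ε * (√N * √(matSpectralNorm M * matSpectralNorm M⁻¹)) * euclNorm w := by
  set first : Fin N := ⟨0, hN⟩
  set last : Fin N := ⟨N - 1, Nat.sub_lt hN Nat.one_pos⟩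
  have hfirst := Pmat_mulVec_curry_zero_of_eq hN h
  have hsucc := fun k (hk : k + 1 < N) ↦ Pmat_mulVec_curry_succ_of_eq hN h hk
  set a := energyNorm M (Function.curry u first)
  have hmono : ∀ i, energyNorm M (Function.curry u i) ≤ a := by
    rintro ⟨k, hk⟩
    induction k with
    | zero => rfl
    | succ k ih =>
      exact (energyNorm_le_of_add_mulVec_eq hM.posSemidef hK hτ (hsucc k hk)).trans (ih _)
  have ha : (1 - ε) * a ≤ ε * (√(matSpectralNorm M) * euclNorm w) :=
    (one_sub_mul_energyNorm_le hM.posSemidef hK hτ hε0 hfirst (hmono last)).trans <| by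
      gcongr
      exact (energyNorm_le_euclNorm M _).trans <| by gcongr; exact euclNorm_curry_le w last
  have hu : euclNorm u ≤ √N * (√(matSpectralNorm M⁻¹) * a) := by
    simpa using euclNorm_le_sqrt_card_mul (u := u)
      (mul_nonneg (Real.sqrt_nonneg _) (energyNorm_nonneg _)) fun i ↦
        (euclNorm_le_energyNorm hM _).trans (by gcongr; exact hmono i)
  calc (1 - ε) * euclNorm u ≤ (1 - ε) * (√N * (√(matSpectralNorm M⁻¹) * a)) := by
        gcongr
    _ = √N * √(matSpectralNorm M⁻¹) * ((1 - ε) * a) := by ring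
    _ ≤ √N * √(matSpectralNorm M⁻¹) * (ε * (√(matSpectralNorm M) * euclNorm w)) := by
        gcongr
    _ = ε * (√N * √(matSpectralNorm M * matSpectralNorm M⁻¹)) * euclNorm w := by
        rw [Real.sqrt_mul (matSpectralNorm_nonneg M)]
        ring

end EnergyEstimate

section Preconditioner

variable {N J : ℕ} {M K : Matrix (Fin J) (Fin J) ℝ} {τ ε : ℝ}

lemma isUnit_det_Pmat (hN : 0 < N) (hM : M.PosDef) (hK : K.PosSemidef) (hτ : 0 ≤ τ)
    (hε0 : 0 ≤ ε) (hε1 : ε < 1) : IsUnit (Pmat N J hN (M + τ • K) M ε).det := by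
  rw [isUnit_iff_ne_zero, Ne, ← exists_mulVec_eq_zero_iff]
  rintro ⟨v, hv, hPv⟩
  have h := one_sub_mul_euclNorm_le_of_Pmat_mulVec_eq hN hM hK hτ hε0 hε1.le (w := 0)
    (by rw [hPv, mulVec_zero, smul_zero])
  rw [euclNorm_eq_zero.mpr rfl, mul_zero] at h
  have : euclNorm v ≤ 0 := le_of_mul_le_mul_left (by rwa [mul_zero]) (sub_pos.mpr hε1)
  exact hv (euclNorm_eq_zero.mp (this.antisymm (euclNorm_nonneg v)))

lemma Pmat_inv_mul_Lmat (hN : 0 < N) (A₀ : Matrix (Fin J) (Fin J) ℝ)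
    (hP : IsUnit (Pmat N J hN A₀ M ε).det) :
    (Pmat N J hN A₀ M ε)⁻¹ * Lmat N J A₀ M = 1 + ε • ((Pmat N J hN A₀ M ε)⁻¹ * Cmat hN M) := by
  rw [Lmat_eq_Pmat_add hN A₀ M ε, Matrix.mul_add, nonsing_inv_mul _ hP, Matrix.mul_smul]

lemma euclNorm_smul_Pmat_inv_mul_Cmat_mulVec_le (hN : 0 < N) (hM : M.PosDef)
    (hK : K.PosSemidef) (hτ : 0 ≤ τ) (hε0 : 0 ≤ ε) (hε1 : ε < 1) {q : ℝ}
    (hq : ε * (√N * √(matSpectralNorm M * matSpectralNorm M⁻¹)) ≤ q * (1 - ε))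
    (v : Fin N × Fin J → ℝ) :
    euclNorm ((ε • ((Pmat N J hN (M + τ • K) M ε)⁻¹ * Cmat hN M)) *ᵥ v) ≤ q * euclNorm v := by
  have hP := isUnit_det_Pmat hN hM hK hτ hε0 hε1
  have h := one_sub_mul_euclNorm_le_of_Pmat_mulVec_eq hN hM hK hτ hε0 hε1.le
    (u := (ε • ((Pmat N J hN (M + τ • K) M ε)⁻¹ * Cmat hN M)) *ᵥ v) (w := v)
    (by rw [smul_mulVec, mulVec_smul, mulVec_mulVec, mul_nonsing_inv_cancel_left _ _ hP])
  refine le_of_mul_le_mul_left (h.trans ?_) (sub_pos.mpr hε1)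
  exact (mul_le_mul_of_nonneg_right hq (euclNorm_nonneg v)).trans_eq (by ring)

end Preconditioner

section Residual

variable {n : Type*} [Fintype n] [DecidableEq n]

lemma euclNorm_pow_mulVec_le {B : Matrix n n ℝ} {q : ℝ} (hq : 0 ≤ q)
    (hB : ∀ v, euclNorm (B *ᵥ v) ≤ q * euclNorm v) (k : ℕ) (v : n → ℝ) :
    euclNorm ((B ^ k) *ᵥ v) ≤ q ^ k * euclNorm v := by
  induction k with
  | zero => simp
  | succ k ih =>
    calc euclNorm ((B ^ (k + 1)) *ᵥ v) = euclNorm (B *ᵥ (B ^ k) *ᵥ v) := by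
          rw [pow_succ', mulVec_mulVec]
      _ ≤ q * (q ^ k * euclNorm v) := (hB _).trans (mul_le_mul_of_nonneg_left ih hq)
      _ = q ^ (k + 1) * euclNorm v := by ring

lemma exists_polynomial_euclNorm_aeval_one_add_mulVec_le {B : Matrix n n ℝ} {q : ℝ}
    (hq : 0 ≤ q) (hB : ∀ v, euclNorm (B *ᵥ v) ≤ q * euclNorm v) (k : ℕ) (r : n → ℝ) :
    ∃ p : Polynomial ℝ, p.natDegree ≤ k ∧ p.eval 0 = 1 ∧
      euclNorm (Polynomial.aeval (1 + B) p *ᵥ r) ≤ q ^ k * euclNorm r := by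
  refine ⟨(1 - Polynomial.X : Polynomial ℝ) ^ k, by compute_degree!, by simp, ?_⟩
  have haeval : Polynomial.aeval (1 + B) ((1 - Polynomial.X : Polynomial ℝ) ^ k) = (-B) ^ k := by
    simp
  rw [haeval]
  exact euclNorm_pow_mulVec_le hq (fun v ↦ by rw [neg_mulVec, euclNorm_neg]; exact hB v) k r

end Residual

lemma le_two_mul_sqrt_div_one_add {δ : ℝ} (h0 : 0 ≤ δ) (h1 : δ ≤ 1) :
    δ ≤ 2 * √δ / (1 + δ) := by
  rw [le_div_iff₀ (by linarith)]
  obtain ⟨s, hs0, rfl⟩ : ∃ s, 0 ≤ s ∧ δ = s ^ 2 := ⟨√δ, Real.sqrt_nonneg δ, (Real.sq_sqrt h0).symm⟩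
  have hs1 : s ≤ 1 := by nlinarith
  rw [Real.sqrt_sq hs0]
  -- `2s - s²(1 + s²) = s (1 - s) (2 + s + s²)`
  have : (0 : ℝ) ≤ 2 + s + s ^ 2 := by positivity
  nlinarith [mul_nonneg (mul_nonneg hs0 (sub_nonneg.mpr hs1)) this]

/-- Let `δ ∈ (0,1)`, `T = Nτ`, `c₀ = √(κ₂(M))`,
`b_τ = δ√τ/(δ√τ + c₀√T)` and `ε ∈ (0, b_τ]`.  Then for every `k ≥ 0` and every
`r₀ ∈ ℝ^{NJ}` there is a real polynomial `p` with `deg p ≤ k` and `p(0) = 1`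
such that `‖p(P_ε⁻¹L) r₀‖₂ ≤ (2√δ/(1+δ))^k ‖r₀‖₂`; since the GMRES residual at
iteration `k` equals the minimum of `‖p(P_ε⁻¹L) r₀‖₂` over such polynomials,
this is the size-independent linear convergence bound
`‖r_k‖₂ ≤ (2√δ/(1+δ))^k ‖r₀‖₂` for GMRES applied to `P_ε⁻¹L u = P_ε⁻¹f`. -/
theorem statement16 (N J : ℕ) (hN : 0 < N) (hJ : 0 < J) (τ : ℝ) (hτ : 0 < τ)
    (M K : Matrix (Fin J) (Fin J) ℝ) (hM : M.PosDef) (hK : K.PosDef)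
    (A₀ : Matrix (Fin J) (Fin J) ℝ) (hA₀ : A₀ = M + τ • K)
    (δ : ℝ) (hδ0 : 0 < δ) (hδ1 : δ < 1)
    (T c₀ bτ : ℝ) (hT : T = N * τ)
    (hc₀ : c₀ = Real.sqrt (matSpectralNorm M * matSpectralNorm M⁻¹))
    (hbτ : bτ = δ * Real.sqrt τ / (δ * Real.sqrt τ + c₀ * Real.sqrt T))
    (ε : ℝ) (hε0 : 0 < ε) (hεb : ε ≤ bτ) :
    ∀ (k : ℕ) (r₀ : Fin N × Fin J → ℝ),
      ∃ p : Polynomial ℝ, p.natDegree ≤ k ∧ p.eval 0 = 1 ∧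
        euclNorm
            ((Polynomial.aeval
              ((Pmat N J hN A₀ M ε)⁻¹ * Lmat N J A₀ M) p).mulVec r₀) ≤
          (2 * Real.sqrt δ / (1 + δ)) ^ k * euclNorm r₀ := by
  subst hA₀ hT hbτ
  intro k r₀
  have : Nonempty (Fin J) := ⟨⟨0, hJ⟩⟩
  have hκ : 1 ≤ c₀ := hc₀ ▸ Real.one_le_sqrt.mpr
    (one_le_matSpectralNorm_mul_inv (isUnit_iff_ne_zero.mpr hM.det_pos.ne'))
  have hkey : ε * (√N * c₀) ≤ δ * (1 - ε) := by
    rw [Real.sqrt_mul (Nat.cast_nonneg N), le_div_iff₀ (by positivity)] at hεb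
    refine le_of_mul_le_mul_right ?_ (Real.sqrt_pos.mpr hτ)
    linarith
  have hε1 : ε < 1 := by
    have : 0 < ε * (√N * c₀) := by positivity
    exact sub_pos.mp (pos_of_mul_pos_right (this.trans_le hkey) hδ0.le)
  obtain ⟨p, hdeg, heval, hp⟩ := exists_polynomial_euclNorm_aeval_one_add_mulVec_le hδ0.le
    (euclNorm_smul_Pmat_inv_mul_Cmat_mulVec_le hN hM hK.posSemidef hτ.le hε0.le hε1
      (hc₀ ▸ hkey)) k r₀
  refine ⟨p, hdeg, heval, ?_⟩
  rw [Pmat_inv_mul_Lmat hN _ (isUnit_det_Pmat hN hM hK.posSemidef hτ.le hε0.le hε1)]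
  exact hp.trans <| mul_le_mul_of_nonneg_right
    (pow_le_pow_left₀ hδ0.le (le_two_mul_sqrt_div_one_add hδ0.le hδ1.le) k) (euclNorm_nonneg r₀)
end
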